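/- arXiv:2111.01848 — 12 statements merged into one kernel-verified Lean document; each statement's English description precedes it below -/
import Mathlib

section
/- Let A be a real n×d matrix of full column rank, let p ≥ 2, and let w ∈ ℝ^n be a vector with strictly positive entries such that w_i ≥ σ(W^{1/2−1/p}A)_i for all i ∈ [n], where W = diag(w). Then for every x ∈ ℝ^d, ‖Ax‖_p ≤ ‖W^{1/2−1/p}Ax‖_2, i.e. (Σ_{i∈[n]} |(Ax)_i|^p)^{1/p} ≤ (Σ_{i∈[n]} w_i^{1−2/p}(Ax)_i^2)^{1/2}. -/
/-!
Put `B = W^{1/2-1/p} A` and `z = B x`, so that the right-hand side is `‖z‖₂`. With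
`a = (B^⊤B)⁻¹ b_i` we have `z_i = ⟨B a, z⟩` and `‖B a‖₂² = σ(B)_i`, so Cauchy–Schwarz gives
`z_i² ≤ σ(B)_i ‖z‖₂² ≤ w_i ‖z‖₂²`. Writing `|(Ax)_i| = w_i^{1/p} v_i`, this says `v_i² ≤ ‖z‖₂²`, whence
`|(Ax)_i|^p = w_i v_i^p ≤ ‖z‖₂^{p-2} w_i v_i² = ‖z‖₂^{p-2} z_i²`; summing over `i` gives
`‖Ax‖_p^p ≤ ‖z‖₂^p`.
-/

open Matrix

/-- Leverage score of row `i` of matrix `M`: `σ(M)_i = m_i^⊤ (M^⊤ M)⁻¹ m_i`. -/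
noncomputable def levScore {n d : ℕ} (M : Matrix (Fin n) (Fin d) ℝ) (i : Fin n) : ℝ :=
  M i ⬝ᵥ ((Mᵀ * M)⁻¹ *ᵥ M i)

open Real

theorem Matrix.isUnit_of_rank_eq_card {m K : Type*} [Fintype m] [DecidableEq m] [Field K]
    {A : Matrix m m K} (h : A.rank = Fintype.card m) : IsUnit A := by
  have hrange : LinearMap.range A.mulVecLin = ⊤ :=
    Submodule.eq_top_of_finrank_eq (by rw [← Matrix.rank, h, Module.finrank_fintype_fun_eq_card])
  exact mulVec_surjective_iff_isUnit.mp (LinearMap.range_eq_top.mp hrange)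

theorem Matrix.isUnit_transpose_mul_self {m d K : Type*} [Fintype m] [Fintype d] [DecidableEq d]
    [Field K] [LinearOrder K] [IsStrictOrderedRing K] {A : Matrix m d K}
    (h : A.rank = Fintype.card d) : IsUnit (Aᵀ * A) :=
  isUnit_of_rank_eq_card (by rw [rank_transpose_mul_self, h])

theorem sq_mulVec_apply_le_levScore_mul {n d : ℕ} {B : Matrix (Fin n) (Fin d) ℝ}
    (hB : IsUnit (Bᵀ * B)) (x : Fin d → ℝ) (i : Fin n) :
    (B *ᵥ x) i ^ 2 ≤ levScore B i * ∑ j, (B *ᵥ x) j ^ 2 := by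
  set a := (Bᵀ * B)⁻¹ *ᵥ B i
  have hrow : ∀ v, (B *ᵥ a) ⬝ᵥ (B *ᵥ v) = B i ⬝ᵥ v := fun v => by
    rw [dotProduct_mulVec, ← mulVec_transpose, mulVec_mulVec, mulVec_mulVec,
      mul_nonsing_inv _ ((isUnit_iff_isUnit_det _).mp hB), one_mulVec]
  have hlev : levScore B i = ∑ j, (B *ᵥ a) j ^ 2 := by
    rw [levScore, ← hrow a]
    simp only [dotProduct, sq]
  rw [hlev, show (B *ᵥ x) i = B i ⬝ᵥ x from rfl, ← hrow x]
  exact Finset.sum_mul_sq_le_sq_mul_sq _ _ _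

theorem rpow_le_rpow_sub_two_div_two_mul_sq {v S p : ℝ} (hv : 0 ≤ v) (hvS : v ^ 2 ≤ S)
    (hp : 2 ≤ p) : v ^ p ≤ S ^ ((p - 2) / 2) * v ^ 2 :=
  calc v ^ p = v ^ (p - 2) * v ^ (2 : ℝ) := by rw [← rpow_add' hv (by linarith), sub_add_cancel]
    _ = (v ^ 2) ^ ((p - 2) / 2) * v ^ 2 := by
        rw [← rpow_natCast_mul hv, rpow_two, Nat.cast_ofNat, mul_div_cancel₀ _ two_ne_zero]
    _ ≤ S ^ ((p - 2) / 2) * v ^ 2 := by gcongr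

theorem rpow_half_sub_inv_mul_sq {w : ℝ} (hw : 0 ≤ w) (p y : ℝ) :
    (w ^ (1 / 2 - 1 / p) * y) ^ 2 = w ^ (1 - 2 / p) * y ^ 2 := by
  rw [mul_pow, ← rpow_mul_natCast hw]; ring_nf

theorem abs_rpow_le_of_rpow_mul_sq_le {p w y S : ℝ} (hp : 2 ≤ p) (hw : 0 < w)
    (h : w ^ (1 - 2 / p) * y ^ 2 ≤ w * S) :
    |y| ^ p ≤ S ^ ((p - 2) / 2) * (w ^ (1 - 2 / p) * y ^ 2) := by
  set u := w ^ p⁻¹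
  have hu : 0 < u := by positivity
  set v := |y| / u
  have hy : |y| = u * v := (mul_div_cancel₀ _ hu.ne').symm
  have hpow : |y| ^ p = w * v ^ p := by
    rw [hy, mul_rpow hu.le (by positivity), rpow_inv_rpow hw.le (by positivity)]
  have hsq : w ^ (1 - 2 / p) * y ^ 2 = w * v ^ 2 := by
    rw [rpow_sub hw, rpow_one, show 2 / p = p⁻¹ * (2 : ℕ) by push_cast; ring,
      rpow_mul_natCast hw.le, ← sq_abs y, hy]
    change w / u ^ 2 * (u * v) ^ 2 = w * v ^ 2
    field_simp
  rw [hsq] at h ⊢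
  rw [hpow, mul_left_comm]
  exact mul_le_mul_of_nonneg_left (rpow_le_rpow_sub_two_div_two_mul_sq (by positivity)
    (le_of_mul_le_mul_left h hw) hp) hw.le

theorem stmt0 {n d : ℕ} (A : Matrix (Fin n) (Fin d) ℝ) (hA : A.rank = d)
    (p : ℝ) (hp : 2 ≤ p) (w : Fin n → ℝ) (hw : ∀ i, 0 < w i)
    (hσ : ∀ i, levScore (Matrix.diagonal (fun j => w j ^ ((1:ℝ)/2 - 1/p)) * A) i ≤ w i)
    (x : Fin d → ℝ) :
    (∑ i, |(A *ᵥ x) i| ^ p) ^ (1/p) ≤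
      (∑ i, w i ^ (1 - 2/p) * ((A *ᵥ x) i) ^ 2) ^ ((1:ℝ)/2) := by
  set B := Matrix.diagonal (fun j => w j ^ ((1:ℝ)/2 - 1/p)) * A
  set S := ∑ i, w i ^ (1 - 2/p) * ((A *ᵥ x) i) ^ 2
  have hS : 0 ≤ S := Finset.sum_nonneg fun i _ =>
    mul_nonneg (rpow_nonneg (hw i).le _) (sq_nonneg _)
  have hBx : ∀ j, (B *ᵥ x) j ^ 2 = w j ^ (1 - 2/p) * ((A *ᵥ x) j) ^ 2 := fun j => by
    rw [← mulVec_mulVec, mulVec_diagonal, rpow_half_sub_inv_mul_sq (hw j).le]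
  have hB : IsUnit (Bᵀ * B) := isUnit_transpose_mul_self <| by
    rw [rank_mul_eq_right_of_isUnit_det _ _ (by simp [det_diagonal, Finset.prod_ne_zero_iff,
      (rpow_pos_of_pos (hw _) _).ne']), hA, Fintype.card_fin]
  have hcoord : ∀ i, |(A *ᵥ x) i| ^ p ≤ S ^ ((p - 2) / 2) * (w i ^ (1 - 2/p) * (A *ᵥ x) i ^ 2) :=
    fun i => abs_rpow_le_of_rpow_mul_sq_le hp (hw i) <| by
      simpa only [hBx] using (sq_mulVec_apply_le_levScore_mul hB x i).trans
        (mul_le_mul_of_nonneg_right (hσ i) (Finset.sum_nonneg fun j _ => sq_nonneg _))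
  have hsum : ∑ i, |(A *ᵥ x) i| ^ p ≤ S ^ (p / 2) :=
    calc ∑ i, |(A *ᵥ x) i| ^ p ≤ S ^ ((p - 2) / 2) * S := by
          rw [Finset.mul_sum]; exact Finset.sum_le_sum fun i _ => hcoord i
      _ = S ^ (p / 2) := by rw [← rpow_add_one' hS (by linarith)]; ring_nf
  calc (∑ i, |(A *ᵥ x) i| ^ p) ^ (1/p) ≤ (S ^ (p / 2)) ^ (1/p) := by gcongr
    _ = S ^ ((1:ℝ)/2) := by rw [← rpow_mul hS]; field_simp
end

section
/- Let A be a real n×d matrix of full column rank, p ≥ 2, g ∈ ℝ^d, and let R = diag(r) with r ∈ ℝ^n nonnegative. Suppose there exists x* ∈ ℝ^d with g^⊤x* = −1, (x*)^⊤A^⊤RAx* ≤ 1, and ‖Ax*‖_p ≤ 1. Let w ∈ ℝ^n be strictly positive with w_i ≥ σ(W^{1/2−1/p}A)_i for all i and Σ_i w_i ≥ d, and let s ∈ ℝ^n satisfy s_i ≥ w_i^{1/p} for all i. Then the infimum over {x ∈ ℝ^d : g^⊤x = −1} of x^⊤A^⊤(d^{1−2/p}R + S^{p−2})Ax is at most 2·(Σ_i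 s_i^p)^{1−2/p}, where S = diag(s). -/
open Matrix

/-!
The point `x*` itself witnesses the bound. Writing `y = A x*`, the `R`-part of the quadratic
form is at most `d^{1-2/p} ≤ (∑ s_i^p)^{1-2/p}`, because `d ≤ ∑ w_i ≤ ∑ s_i^p`. The `S^{p-2}`-part
is `∑ s_i^{p-2} y_i^2`, which Hölder's inequality with exponents `p/(p-2)` and `p/2` bounds by
`(∑ s_i^p)^{1-2/p} ‖y‖_p^2 ≤ (∑ s_i^p)^{1-2/p}`.
-/

open Finset Real

theorem Matrix.dotProduct_mulVec_transpose_mul_diagonal_mul {m n R : Type*} [Fintype m]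
    [Fintype n] [DecidableEq m] [CommSemiring R] (A : Matrix m n R) (D : m → R) (x : n → R) :
    x ⬝ᵥ ((Aᵀ * diagonal D * A) *ᵥ x) = ∑ i, D i * (A *ᵥ x) i ^ 2 := by
  rw [← mulVec_mulVec, ← mulVec_mulVec, dotProduct_mulVec, vecMul_transpose]
  simp only [dotProduct, mulVec_diagonal]
  exact sum_congr rfl fun i _ => by ring

theorem Matrix.dotProduct_mulVec_transpose_mul_diagonal_mul_nonneg {m n R : Type*} [Fintype m]
    [Fintype n] [DecidableEq m] [CommRing R] [LinearOrder R] [IsStrictOrderedRing R]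
    (A : Matrix m n R) {D : m → R} (hD : ∀ i, 0 ≤ D i) (x : n → R) :
    0 ≤ x ⬝ᵥ ((Aᵀ * diagonal D * A) *ᵥ x) := by
  rw [dotProduct_mulVec_transpose_mul_diagonal_mul]
  exact sum_nonneg fun i _ => mul_nonneg (hD i) (sq_nonneg _)

section Holder

variable {ι : Type*} [Fintype ι] {p : ℝ}

theorem Real.sum_rpow_sub_two_mul_sq_le (hp : 2 ≤ p) {s : ι → ℝ} (hs : ∀ i, 0 ≤ s i)
    (y : ι → ℝ) :
    ∑ i, s i ^ (p - 2) * y i ^ 2 ≤ (∑ i, s i ^ p) ^ (1 - 2 / p) * (∑ i, |y i| ^ p) ^ (2 / p) := by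
  rcases hp.eq_or_lt with rfl | hp
  · norm_num [sq_abs]
  have hconj : HolderConjugate (p / (p - 2)) (p / 2) := by
    rw [holderConjugate_iff]
    refine ⟨by rw [lt_div_iff₀ (by linarith)]; linarith, ?_⟩
    field_simp
    ring
  calc ∑ i, s i ^ (p - 2) * y i ^ 2
      ≤ (∑ i, (s i ^ (p - 2)) ^ (p / (p - 2))) ^ (1 / (p / (p - 2))) *
          (∑ i, (y i ^ 2) ^ (p / 2)) ^ (1 / (p / 2)) :=
        inner_le_Lp_mul_Lq_of_nonneg _ hconj (fun i _ => rpow_nonneg (hs i) _)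
          (fun i _ => sq_nonneg _)
    _ = (∑ i, s i ^ p) ^ (1 - 2 / p) * (∑ i, |y i| ^ p) ^ (2 / p) := by
        have hs_pow : ∀ i, (s i ^ (p - 2)) ^ (p / (p - 2)) = s i ^ p := fun i => by
          rw [← rpow_mul (hs i)]
          congr 1
          field_simp [show p - 2 ≠ 0 by linarith]
        have hy_pow : ∀ i, (y i ^ 2) ^ (p / 2) = |y i| ^ p := fun i => by
          rw [← sq_abs, ← rpow_natCast, ← rpow_mul (abs_nonneg _)]
          congr 1
          push_cast
          field_simp
        have h_exp : 1 / (p / (p - 2)) = 1 - 2 / p := by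
          field_simp
        simp only [hs_pow, hy_pow, h_exp, one_div_div]

theorem Real.sum_rpow_sub_two_mul_sq_le_of_sum_rpow_le_one (hp : 2 ≤ p) {s : ι → ℝ}
    (hs : ∀ i, 0 ≤ s i) {y : ι → ℝ} (hy : ∑ i, |y i| ^ p ≤ 1) :
    ∑ i, s i ^ (p - 2) * y i ^ 2 ≤ (∑ i, s i ^ p) ^ (1 - 2 / p) := by
  refine (sum_rpow_sub_two_mul_sq_le hp hs y).trans (mul_le_of_le_one_right
    (rpow_nonneg (sum_nonneg fun i _ => rpow_nonneg (hs i) _) _) ?_)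
  exact rpow_le_one (sum_nonneg fun i _ => rpow_nonneg (abs_nonneg _) _) hy (by positivity)

end Holder

theorem stmt4_general {n d : ℕ} (A : Matrix (Fin n) (Fin d) ℝ)
    (p : ℝ) (hp : 2 ≤ p) (g : Fin d → ℝ) (r : Fin n → ℝ) (hr : ∀ i, 0 ≤ r i)
    (hex : ∃ xs : Fin d → ℝ, g ⬝ᵥ xs = -1 ∧
      xs ⬝ᵥ ((Aᵀ * Matrix.diagonal r * A) *ᵥ xs) ≤ 1 ∧
      (∑ i, |(A *ᵥ xs) i| ^ p) ^ (1/p) ≤ 1)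
    (w : Fin n → ℝ) (hw : ∀ i, 0 < w i)
    (hw1 : (d : ℝ) ≤ ∑ i, w i)
    (s : Fin n → ℝ) (hs : ∀ i, w i ^ (1/p) ≤ s i) :
    sInf {E : ℝ | ∃ x : Fin d → ℝ, g ⬝ᵥ x = -1 ∧
        E = x ⬝ᵥ ((Aᵀ * ((d : ℝ) ^ (1 - 2/p) • Matrix.diagonal r +
          Matrix.diagonal (fun i => s i ^ (p - 2))) * A) *ᵥ x)} ≤
      2 * (∑ i, s i ^ p) ^ (1 - 2/p) := by
  have hp0 : 0 < p := by linarith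
  have hs0 : ∀ i, 0 ≤ s i := fun i => (rpow_nonneg (hw i).le _).trans (hs i)
  have h_diag : (d : ℝ) ^ (1 - 2/p) • diagonal r + diagonal (fun i => s i ^ (p - 2)) =
      diagonal (fun i => (d : ℝ) ^ (1 - 2/p) * r i + s i ^ (p - 2)) := by
    rw [← diagonal_smul, ← diagonal_add]
    rfl
  obtain ⟨xs, hg, hR, hLp⟩ := hex
  simp only [h_diag]
  refine le_trans (csInf_le ⟨0, ?_⟩ ⟨xs, hg, rfl⟩) ?_
  · rintro _ ⟨x, -, rfl⟩
    exact dotProduct_mulVec_transpose_mul_diagonal_mul_nonneg A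
      (fun i => add_nonneg (mul_nonneg (by positivity) (hr i)) (rpow_nonneg (hs0 i) _)) x
  rw [dotProduct_mulVec_transpose_mul_diagonal_mul] at hR ⊢
  simp only [add_mul, sum_add_distrib, mul_assoc, ← mul_sum]
  have hy : ∑ i, |(A *ᵥ xs) i| ^ p ≤ 1 := by
    rwa [one_div, rpow_inv_le_iff_of_pos (sum_nonneg fun i _ => rpow_nonneg (abs_nonneg _) _)
      zero_le_one hp0, one_rpow] at hLp
  have hd : (d : ℝ) ≤ ∑ i, s i ^ p := hw1.trans <| sum_le_sum fun i _ => by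
    rw [← rpow_inv_le_iff_of_pos (hw i).le (hs0 i) hp0, ← one_div]
    exact hs i
  have h_exp : 0 ≤ 1 - 2 / p := by rw [sub_nonneg, div_le_one hp0]; exact hp
  calc _ ≤ (∑ i, s i ^ p) ^ (1 - 2/p) * 1 + (∑ i, s i ^ p) ^ (1 - 2/p) :=
        add_le_add (mul_le_mul (rpow_le_rpow d.cast_nonneg hd h_exp) hR
          (sum_nonneg fun i _ => mul_nonneg (hr i) (sq_nonneg _))
          (rpow_nonneg (d.cast_nonneg.trans hd) _))
        (sum_rpow_sub_two_mul_sq_le_of_sum_rpow_le_one hp hs0 hy)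
    _ = 2 * (∑ i, s i ^ p) ^ (1 - 2/p) := by ring

theorem stmt4 {n d : ℕ} (A : Matrix (Fin n) (Fin d) ℝ) (hA : A.rank = d)
    (p : ℝ) (hp : 2 ≤ p) (g : Fin d → ℝ) (r : Fin n → ℝ) (hr : ∀ i, 0 ≤ r i)
    (hex : ∃ xs : Fin d → ℝ, g ⬝ᵥ xs = -1 ∧
      xs ⬝ᵥ ((Aᵀ * Matrix.diagonal r * A) *ᵥ xs) ≤ 1 ∧
      (∑ i, |(A *ᵥ xs) i| ^ p) ^ (1/p) ≤ 1)
    (w : Fin n → ℝ) (hw : ∀ i, 0 < w i)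
    (hσ : ∀ i, levScore (Matrix.diagonal (fun j => w j ^ ((1:ℝ)/2 - 1/p)) * A) i ≤ w i)
    (hw1 : (d : ℝ) ≤ ∑ i, w i)
    (s : Fin n → ℝ) (hs : ∀ i, w i ^ (1/p) ≤ s i) :
    sInf {E : ℝ | ∃ x : Fin d → ℝ, g ⬝ᵥ x = -1 ∧
        E = x ⬝ᵥ ((Aᵀ * ((d : ℝ) ^ (1 - 2/p) • Matrix.diagonal r +
          Matrix.diagonal (fun i => s i ^ (p - 2))) * A) *ᵥ x)} ≤
      2 * (∑ i, s i ^ p) ^ (1 - 2/p) :=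
  stmt4_general A p hp g r hr hex w hw hw1 s hs
end

section
/- Let p ≥ 2, α > 0, τ ≥ 0, and let s, u ∈ ℝ^n with s entrywise nonnegative. Suppose Σ_{i∈[n]} s_i^{p−2}u_i^2 ≤ 2(Σ_{i∈[n]} s_i^p)^{1−2/p} and Σ_{i∈[n]} |u_i|^p ≤ τ. Then ‖s + α|u|‖_p^p − ‖s‖_p^p ≤ 5pα(Σ_{i∈[n]} s_i^p)^{1−1/p} + 3p^pα^pτ, where |u| denotes the vector of absolute values of the entries of u. Moreover, for any real n×d matrix A, positive semidefinite diagonal matrix D, and g ∈ ℝ^d, if s' ≥ s ≥ 0 entrywise then inf{ x^⊤A^⊤(D + diag(s')^{p−2})Ax : g^⊤x = −1 } ≥ inf{ x^⊤A^⊤(D + diag(s)^{p−2})Ax : g^⊤x = −1 }. -/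
open Matrix

-- (1+1/p)^p ≤ 3
lemma aux_exp3 {p : ℝ} (hp : 1 ≤ p) : (1 + 1/p) ^ p ≤ 3 := by
  have hp0 : (0:ℝ) < p := lt_of_lt_of_le one_pos hp
  have h1 : (1 + 1/p : ℝ) ≤ Real.exp (1/p) := by
    have := Real.add_one_le_exp (1/p); linarith
  have h2 : (1 + 1/p) ^ p ≤ (Real.exp (1/p)) ^ p :=
    Real.rpow_le_rpow (by positivity) h1 hp0.le
  have h3 : (Real.exp (1/p)) ^ p = Real.exp 1 := by
    rw [← Real.exp_mul, one_div_mul_cancel hp0.ne']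
  have h4 : Real.exp 1 ≤ 3 := by
    have := Real.exp_one_lt_d9; linarith
  linarith [h2, h3 ▸ h2]

-- Bernoulli-style bound
lemma aux_bern {a b p : ℝ} (ha : 0 ≤ a) (hb : 0 ≤ b) (hp : 1 ≤ p) :
    (a + b) ^ p ≤ a ^ p + p * (a + b) ^ (p - 1) * b := by
  have hp0 : (0:ℝ) < p := lt_of_lt_of_le one_pos hp
  rcases eq_or_lt_of_le (by linarith : (0:ℝ) ≤ a + b) with hc | hc
  · have ha0 : a = 0 := by linarith
    have hb0 : b = 0 := by linarith
    simp [ha0, hb0, Real.zero_rpow hp0.ne']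
  · set c := a + b with hcdef
    have hsb : (-1:ℝ) ≤ -(b/c) := by
      have : b / c ≤ 1 := by
        rw [div_le_one hc]; linarith
      linarith
    have hbern := one_add_mul_self_le_rpow_one_add hsb hp
    have h1mc : (1 + -(b/c)) = a / c := by field_simp; linarith [hcdef]
    rw [h1mc] at hbern
    have hdiv : (a / c) ^ p = a ^ p / c ^ p := Real.div_rpow ha hc.le p
    rw [hdiv] at hbern
    have hcp : (0:ℝ) < c ^ p := Real.rpow_pos_of_pos hc p
    have hmul := mul_le_mul_of_nonneg_right hbern hcp.le
    rw [div_mul_cancel₀ _ hcp.ne'] at hmul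
    have hsplit : c ^ p = c ^ (p - 1) * c := by
      rw [← Real.rpow_add_one hc.ne' (p-1)]; ring_nf
    calc c ^ p = (1 + p * -(b/c)) * c ^ p + p * (b/c) * c ^ p := by ring
      _ ≤ a ^ p + p * (b/c) * c ^ p := by linarith
      _ = a ^ p + p * c ^ (p-1) * b := by
          rw [hsplit]; field_simp

-- per-coordinate key bound
lemma aux_key {p a b : ℝ} (hp : 2 ≤ p) (ha : 0 ≤ a) (hb : 0 ≤ b) :
    (a + b) ^ p ≤ a ^ p + 3 * p * a ^ (p - 1) * b + 3 * p ^ p * b ^ p := by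
  have hp1 : (1:ℝ) ≤ p := by linarith
  have hp0 : (0:ℝ) < p := by linarith
  rcases eq_or_lt_of_le hb with hb0 | hb0
  · have hppos : (0:ℝ) ≤ 3 * p ^ p * b ^ p := by
      have : (0:ℝ) < p ^ p := Real.rpow_pos_of_pos hp0 p
      have : (0:ℝ) ≤ b ^ p := Real.rpow_nonneg hb p
      positivity
    rw [← hb0]
    simp [Real.zero_rpow hp0.ne']
  · by_cases hcase : p * b ≤ a
    · have ha0 : 0 < a := lt_of_lt_of_le (by positivity) hcase
      have hbr := aux_bern ha hb hp1
      have hbound : (a + b) ^ (p - 1) ≤ 3 * a ^ (p - 1) := by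
        have hab : a + b ≤ a * (1 + 1/p) := by
          have : b ≤ a / p := (le_div_iff₀ hp0).2 (by linarith)
          have : a + b ≤ a + a / p := by linarith
          calc a + b ≤ a + a / p := this
            _ = a * (1 + 1/p) := by field_simp
        calc (a + b) ^ (p - 1) ≤ (a * (1 + 1/p)) ^ (p - 1) :=
              Real.rpow_le_rpow (by linarith) hab (by linarith)
          _ = a ^ (p - 1) * (1 + 1/p) ^ (p - 1) :=
              Real.mul_rpow ha0.le (by positivity)
          _ ≤ a ^ (p - 1) * 3 := by
              have h1 : (1 + 1/p) ^ (p - 1) ≤ (1 + 1/p) ^ p :=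
                Real.rpow_le_rpow_of_exponent_le (by have := one_div_pos.mpr hp0; linarith) (by linarith)
              have h2 := aux_exp3 hp1
              have := Real.rpow_nonneg (le_of_lt ha0) (p - 1)
              nlinarith
          _ = 3 * a ^ (p - 1) := by ring
      have hterm : p * (a + b) ^ (p - 1) * b ≤ 3 * p * a ^ (p - 1) * b := by
        nlinarith [mul_le_mul_of_nonneg_right (mul_le_mul_of_nonneg_left hbound hp0.le) hb]
      have hlast : (0:ℝ) ≤ 3 * p ^ p * b ^ p := by
        have h1 : (0:ℝ) < p ^ p := Real.rpow_pos_of_pos hp0 p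
        have h2 : (0:ℝ) ≤ b ^ p := Real.rpow_nonneg hb p
        positivity
      linarith
    · push_neg at hcase
      have h1 : (a + b) ^ p ≤ ((p + 1) * b) ^ p := by
        apply Real.rpow_le_rpow (by linarith) (by nlinarith) hp0.le
      have h2 : ((p + 1) * b) ^ p = (p + 1) ^ p * b ^ p :=
        Real.mul_rpow (by linarith) hb
      have h3 : (p + 1) ^ p = p ^ p * (1 + 1/p) ^ p := by
        rw [← Real.mul_rpow hp0.le (by positivity)]
        congr 1
        field_simp
      have h4 : (1 + 1/p) ^ p ≤ 3 := aux_exp3 hp1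
      have hpp : (0:ℝ) < p ^ p := Real.rpow_pos_of_pos hp0 p
      have hbp : (0:ℝ) ≤ b ^ p := Real.rpow_nonneg hb p
      have hap : (0:ℝ) ≤ a ^ p := Real.rpow_nonneg ha p
      have ha1 : (0:ℝ) ≤ a ^ (p - 1) := Real.rpow_nonneg ha (p - 1)
      have h5 : (1 + 1/p) ^ p * (p ^ p * b ^ p) ≤ 3 * (p ^ p * b ^ p) :=
        mul_le_mul_of_nonneg_right h4 (mul_nonneg hpp.le hbp)
      nlinarith [h5, mul_nonneg (mul_nonneg (mul_nonneg (by norm_num : (0:ℝ) ≤ 3) hp0.le) ha1) hb]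

-- quadratic form with diagonal matrix
lemma aux_quad {n d : ℕ} (B : Matrix (Fin n) (Fin d) ℝ) (f : Fin n → ℝ) (x : Fin d → ℝ) :
    x ⬝ᵥ ((Bᵀ * Matrix.diagonal f * B) *ᵥ x) = ∑ i, f i * ((B *ᵥ x) i) ^ 2 := by
  rw [← Matrix.mulVec_mulVec, ← Matrix.mulVec_mulVec, Matrix.dotProduct_mulVec,
    Matrix.vecMul_transpose]
  simp only [Matrix.mulVec_diagonal, dotProduct]
  exact Finset.sum_congr rfl fun i _ => by ring

theorem stmt5 {n d : ℕ} (p : ℝ) (hp : 2 ≤ p) (α τ : ℝ) (hα : 0 < α) (hτ : 0 ≤ τ)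
    (s u : Fin n → ℝ) (hs : ∀ i, 0 ≤ s i)
    (h1 : ∑ i, s i ^ (p - 2) * (u i) ^ 2 ≤ 2 * (∑ i, s i ^ p) ^ (1 - 2/p))
    (h2 : ∑ i, |u i| ^ p ≤ τ)
    (A : Matrix (Fin n) (Fin d) ℝ) (D : Fin n → ℝ) (hD : ∀ i, 0 ≤ D i) (g : Fin d → ℝ)
    (s' : Fin n → ℝ) (hs' : ∀ i, s i ≤ s' i) :
    (∑ i, (s i + α * |u i|) ^ p) - (∑ i, s i ^ p) ≤
      5 * p * α * (∑ i, s i ^ p) ^ (1 - 1/p) + 3 * p ^ p * α ^ p * τ ∧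
    sInf {E : ℝ | ∃ x : Fin d → ℝ, g ⬝ᵥ x = -1 ∧
        E = x ⬝ᵥ ((Aᵀ * (Matrix.diagonal D + Matrix.diagonal (fun i => s i ^ (p - 2))) * A) *ᵥ x)} ≤
    sInf {E : ℝ | ∃ x : Fin d → ℝ, g ⬝ᵥ x = -1 ∧
        E = x ⬝ᵥ ((Aᵀ * (Matrix.diagonal D + Matrix.diagonal (fun i => s' i ^ (p - 2))) * A) *ᵥ x)} := by
  have hp0 : (0:ℝ) < p := by linarith
  set S := ∑ i, s i ^ p with hSdef
  have hS0 : 0 ≤ S := Finset.sum_nonneg fun i _ => Real.rpow_nonneg (hs i) p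
  constructor
  · -- analytic part
    set T := ∑ i, s i ^ (p - 1) * |u i| with hTdef
    have hT0 : 0 ≤ T := Finset.sum_nonneg fun i _ =>
      mul_nonneg (Real.rpow_nonneg (hs i) _) (abs_nonneg _)
    -- Cauchy-Schwarz
    have hCS : T ^ 2 ≤ S * ∑ i, s i ^ (p - 2) * (u i) ^ 2 := by
      have := Finset.sum_mul_sq_le_sq_mul_sq Finset.univ
        (fun i => s i ^ (p/2)) (fun i => s i ^ ((p-2)/2) * |u i|)
      have e1 : ∀ i : Fin n, s i ^ (p/2) * (s i ^ ((p-2)/2) * |u i|) = s i ^ (p-1) * |u i| := by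
        intro i
        rcases eq_or_lt_of_le (hs i) with h | h
        · rw [← h, Real.zero_rpow (by positivity : p/2 ≠ 0),
            Real.zero_rpow (by intro hh; linarith : p - 1 ≠ 0)]
          ring
        · rw [← mul_assoc, ← Real.rpow_add h]
          congr 2
          ring
      have e2 : ∀ i : Fin n, (s i ^ (p/2)) ^ 2 = s i ^ p := by
        intro i
        rw [← Real.rpow_natCast (s i ^ (p/2)) 2, ← Real.rpow_mul (hs i)]
        norm_num
      have e3 : ∀ i : Fin n, (s i ^ ((p-2)/2) * |u i|) ^ 2 = s i ^ (p-2) * (u i) ^ 2 := by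
        intro i
        rw [mul_pow, ← Real.rpow_natCast (s i ^ ((p-2)/2)) 2, ← Real.rpow_mul (hs i), sq_abs]
        norm_num
      simp only [e1, e2, e3] at this
      exact this
    have hT2 : T ^ 2 ≤ 2 * S ^ (2 - 2/p) := by
      have step1 : T ^ 2 ≤ S * (2 * S ^ (1 - 2/p)) :=
        le_trans hCS (mul_le_mul_of_nonneg_left h1 hS0)
      rcases eq_or_lt_of_le hS0 with h | h
      · have h2p : 2/p ≤ 1 := by rw [div_le_one hp0]; exact hp
        rw [← h] at step1 ⊢
        rw [Real.zero_rpow (ne_of_gt (by linarith : (0:ℝ) < 2 - 2/p))]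
        have hst : T ^ 2 ≤ 0 := by simpa using step1
        linarith
      · have : S * (2 * S ^ (1 - 2/p)) = 2 * S ^ (2 - 2/p) := by
          rw [show (2:ℝ) - 2/p = 1 + (1 - 2/p) by ring, Real.rpow_add h, Real.rpow_one]
          ring
        linarith
    have hRsq : (Real.sqrt 2 * S ^ (1 - 1/p)) ^ 2 = 2 * S ^ (2 - 2/p) := by
      rw [mul_pow, Real.sq_sqrt (by norm_num : (0:ℝ) ≤ 2),
        ← Real.rpow_natCast (S ^ (1 - 1/p)) 2, ← Real.rpow_mul hS0]
      norm_num
      ring_nf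
    have hRnn : 0 ≤ Real.sqrt 2 * S ^ (1 - 1/p) :=
      mul_nonneg (Real.sqrt_nonneg 2) (Real.rpow_nonneg hS0 _)
    have hT : T ≤ Real.sqrt 2 * S ^ (1 - 1/p) := by
      nlinarith [hT2, hRsq, hT0, hRnn]
    -- sum the per-coordinate bounds
    have hsum : ∑ i, (s i + α * |u i|) ^ p ≤
        ∑ i, (s i ^ p + 3 * p * s i ^ (p - 1) * (α * |u i|) + 3 * p ^ p * (α * |u i|) ^ p) :=
      Finset.sum_le_sum fun i _ => aux_key hp (hs i) (by positivity)
    have hexp : ∀ i : Fin n, (α * |u i|) ^ p = α ^ p * |u i| ^ p := fun i =>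
      Real.mul_rpow hα.le (abs_nonneg _)
    have hsum2 : ∑ i, (s i ^ p + 3 * p * s i ^ (p - 1) * (α * |u i|) + 3 * p ^ p * (α * |u i|) ^ p)
        = S + 3 * p * α * T + 3 * p ^ p * α ^ p * ∑ i, |u i| ^ p := by
      rw [Finset.sum_add_distrib, Finset.sum_add_distrib]
      congr 1
      · congr 1
        rw [hTdef, Finset.mul_sum]
        exact Finset.sum_congr rfl fun i _ => by ring
      · rw [Finset.mul_sum]
        exact Finset.sum_congr rfl fun i _ => by rw [hexp i]; ring
    have hsqrt2 : Real.sqrt 2 ≤ 5/3 := by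
      rw [show (5:ℝ)/3 = Real.sqrt ((5/3)^2) by rw [Real.sqrt_sq (by norm_num)]]
      apply Real.sqrt_le_sqrt; norm_num
    have hpos : 0 ≤ p * α * S ^ (1 - 1/p) := by
      have := Real.rpow_nonneg hS0 (1 - 1/p); positivity
    have hppnn : (0:ℝ) ≤ p ^ p := (Real.rpow_pos_of_pos hp0 p).le
    have hαpnn : (0:ℝ) ≤ α ^ p := Real.rpow_nonneg hα.le p
    have htau : 3 * p ^ p * α ^ p * ∑ i, |u i| ^ p ≤ 3 * p ^ p * α ^ p * τ := by
      apply mul_le_mul_of_nonneg_left h2; positivity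
    have h3T : 3 * p * α * T ≤ 5 * p * α * S ^ (1 - 1/p) := by
      have := mul_le_mul_of_nonneg_left hT (by positivity : (0:ℝ) ≤ 3 * p * α)
      nlinarith [Real.rpow_nonneg hS0 (1 - 1/p)]
    linarith [hsum, hsum2 ▸ hsum]
  · -- sInf part
    have hdiag : ∀ (f : Fin n → ℝ) (x : Fin d → ℝ),
        x ⬝ᵥ ((Aᵀ * (Matrix.diagonal D + Matrix.diagonal f) * A) *ᵥ x)
          = ∑ i, (D i + f i) * ((A *ᵥ x) i) ^ 2 := by
      intro f x
      rw [Matrix.diagonal_add, aux_quad]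
    by_cases hg : ∃ x : Fin d → ℝ, g ⬝ᵥ x = -1
    · obtain ⟨x0, hx0⟩ := hg
      have hbdd : BddBelow {E : ℝ | ∃ x : Fin d → ℝ, g ⬝ᵥ x = -1 ∧
          E = x ⬝ᵥ ((Aᵀ * (Matrix.diagonal D + Matrix.diagonal (fun i => s i ^ (p - 2))) * A) *ᵥ x)} := by
        refine ⟨0, fun E hE => ?_⟩
        obtain ⟨x, _, rfl⟩ := hE
        rw [hdiag]
        apply Finset.sum_nonneg
        intro i _
        have := Real.rpow_nonneg (hs i) (p - 2)
        have := hD i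
        positivity
      apply le_csInf
      · exact ⟨_, x0, hx0, rfl⟩
      · rintro E ⟨x, hx, rfl⟩
        apply csInf_le_of_le hbdd ⟨x, hx, rfl⟩
        rw [hdiag, hdiag]
        apply Finset.sum_le_sum
        intro i _
        have hle : s i ^ (p - 2) ≤ s' i ^ (p - 2) :=
          Real.rpow_le_rpow (hs i) (hs' i) (by linarith)
        have := sq_nonneg ((A *ᵥ x) i)
        nlinarith
    · have he1 : {E : ℝ | ∃ x : Fin d → ℝ, g ⬝ᵥ x = -1 ∧
          E = x ⬝ᵥ ((Aᵀ * (Matrix.diagonal D + Matrix.diagonal (fun i => s i ^ (p - 2))) * A) *ᵥ x)} = ∅ := by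
        ext E; simp only [Set.mem_setOf_eq, Set.mem_empty_iff_false, iff_false]
        rintro ⟨x, hx, _⟩; exact hg ⟨x, hx⟩
      have he2 : {E : ℝ | ∃ x : Fin d → ℝ, g ⬝ᵥ x = -1 ∧
          E = x ⬝ᵥ ((Aᵀ * (Matrix.diagonal D + Matrix.diagonal (fun i => s' i ^ (p - 2))) * A) *ᵥ x)} = ∅ := by
        ext E; simp only [Set.mem_setOf_eq, Set.mem_empty_iff_false, iff_false]
        rintro ⟨x, hx, _⟩; exact hg ⟨x, hx⟩
      rw [he1, he2]
end

section
/- Let A be a real n×d matrix of full column rank, p > 2, and let w ∈ ℝ^n be strictly positive with w_i ≥ σ(W^{1/2−1/p}A)_i for all i, where W = diag(w). Let D be an n×n diagonal matrix with D ⪰ W^{1−2/p} (Loewner order), let v ∈ ℝ^n be entrywise nonnegative with (Σ_i v_i^{p/(p−2)})^{(p−2)/p} ≤ 1, and set V = diag(v). Let g ∈ ℝ^d be nonzero, define ℰ = inf{ x^⊤A^⊤DAx : g^⊤x = −1 }, ℰ^new = inf{ x^⊤A^⊤(D+V)Ax : g^⊤x = −1 }, and y = −(g^⊤(A^⊤DA)^{−1}g)^{−1}(A^⊤DA)^{−1}g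 (the minimizer of the first infimum). Then ℰ^new − ℰ ≥ (1/2)·Σ_{i∈[n]} v_i(Ay)_i^2. -/
open Matrix

/-!
Write `Q = AᵀDA`. Since `Q y` is a multiple of `g`, every `x` with `g ⬝ᵥ x = -1` satisfies
`xᵀQx = yᵀQy + (x - y)ᵀQ(x - y)`. For any `z`, Cauchy–Schwarz against the leverage-score bound
gives `(Az)ᵢ² ≤ wᵢ^(2/p) · zᵀAᵀW^(1-2/p)Az`, hence `‖(Az)²‖_(p/2) ≤ zᵀAᵀW^(1-2/p)Az ≤ zᵀQz`, and
Hölder with `‖v‖_(p/(p-2)) ≤ 1` yields `∑ vᵢ(Az)ᵢ² ≤ zᵀQz`. Taking `z = x - y` and using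
`b²/2 ≤ a² + (a - b)²` pointwise gives `xᵀ(Q + AᵀVA)x ≥ yᵀQy + ½ ∑ vᵢ(Ay)ᵢ²`.
-/

open Finset Real

namespace Matrix

theorem mulVec_injective_of_rank_eq_card {m n K : Type*} [Fintype n] [Field K]
    {A : Matrix m n K} (hA : A.rank = Fintype.card n) : Function.Injective A.mulVec := by
  rw [mulVec_injective_iff, linearIndependent_iff_card_eq_finrank_span, ← hA,
    rank_eq_finrank_span_cols]
  rfl

variable {m n : Type*} [Fintype m] [Fintype n]

theorem dotProduct_mulVec_transpose_mul_diagonal_mul_s6 {R : Type*} [CommSemiring R]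
    [DecidableEq m] (A : Matrix m n R) (B : m → R) (x : n → R) :
    x ⬝ᵥ ((Aᵀ * diagonal B * A) *ᵥ x) = ∑ i, B i * (A *ᵥ x) i ^ 2 := by
  rw [← mulVec_mulVec, ← mulVec_mulVec, dotProduct_mulVec, vecMul_transpose]
  simp only [dotProduct, mulVec_diagonal]
  exact sum_congr rfl fun i _ => by ring

theorem posDef_transpose_mul_diagonal_mul [DecidableEq m] {A : Matrix m n ℝ}
    (hA : Function.Injective A.mulVec) {B : m → ℝ} (hB : ∀ i, 0 < B i) :
    (Aᵀ * diagonal B * A).PosDef := by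
  simpa using (PosDef.diagonal hB).conjTranspose_mul_mul_same hA

theorem dotProduct_mulVec_comm_of_isSymm {R : Type*} [CommSemiring R] {Q : Matrix n n R}
    (hQ : Q.IsSymm) (x y : n → R) : x ⬝ᵥ (Q *ᵥ y) = y ⬝ᵥ (Q *ᵥ x) := by
  rw [dotProduct_mulVec, dotProduct_comm, ← mulVec_transpose, hQ.eq]

theorem IsSymm.dotProduct_mulVec_eq_add_of_mulVec_eq_smul {R : Type*} [CommRing R]
    {Q : Matrix n n R} (hQ : Q.IsSymm) {g x y : n → R} {c : R} (hy : Q *ᵥ y = c • g)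
    (hx : g ⬝ᵥ x = g ⬝ᵥ y) :
    x ⬝ᵥ (Q *ᵥ x) = y ⬝ᵥ (Q *ᵥ y) + (x - y) ⬝ᵥ (Q *ᵥ (x - y)) := by
  have hxy : x ⬝ᵥ (Q *ᵥ y) = y ⬝ᵥ (Q *ᵥ y) := by
    rw [hy, dotProduct_smul, dotProduct_smul, dotProduct_comm x, dotProduct_comm y, hx]
  have hyx : y ⬝ᵥ (Q *ᵥ x) = y ⬝ᵥ (Q *ᵥ y) := by
    rw [dotProduct_mulVec_comm_of_isSymm hQ, hxy]
  simp only [mulVec_sub, dotProduct_sub, sub_dotProduct, hxy, hyx]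
  ring

variable [DecidableEq n]

/-- The minimizer of `x ⬝ᵥ (Q *ᵥ x)` subject to `g ⬝ᵥ x = -1`. -/
noncomputable def constrainedMin (Q : Matrix n n ℝ) (g : n → ℝ) : n → ℝ :=
  -(g ⬝ᵥ (Q⁻¹ *ᵥ g))⁻¹ • (Q⁻¹ *ᵥ g)

theorem mulVec_constrainedMin {Q : Matrix n n ℝ} (hQ : IsUnit Q.det) (g : n → ℝ) :
    Q *ᵥ constrainedMin Q g = -(g ⬝ᵥ (Q⁻¹ *ᵥ g))⁻¹ • g := by
  rw [constrainedMin, mulVec_smul, mulVec_mulVec, mul_nonsing_inv _ hQ, one_mulVec]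

theorem PosDef.dotProduct_constrainedMin {Q : Matrix n n ℝ} (hQ : Q.PosDef) {g : n → ℝ}
    (hg : g ≠ 0) : g ⬝ᵥ constrainedMin Q g = -1 := by
  have hpos : 0 < g ⬝ᵥ (Q⁻¹ *ᵥ g) := by simpa using hQ.inv.dotProduct_mulVec_pos hg
  rw [constrainedMin, dotProduct_smul, smul_eq_mul, neg_mul, inv_mul_cancel₀ hpos.ne']

theorem sq_mulVec_apply_le_levScore_mul {N d : ℕ} {M : Matrix (Fin N) (Fin d) ℝ}
    (hM : IsUnit (Mᵀ * M).det) (z : Fin d → ℝ) (i : Fin N) :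
    (M *ᵥ z) i ^ 2 ≤ levScore M i * ((M *ᵥ z) ⬝ᵥ (M *ᵥ z)) := by
  -- both `(M *ᵥ z) i` and the leverage score are inner products against `M *ᵥ u`
  set u := (Mᵀ * M)⁻¹ *ᵥ M i
  have hu : Mᵀ *ᵥ (M *ᵥ u) = M i := by
    rw [mulVec_mulVec, mulVec_mulVec, mul_nonsing_inv _ hM, one_mulVec]
  have hdot : ∀ x, M i ⬝ᵥ x = (M *ᵥ u) ⬝ᵥ (M *ᵥ x) := fun x => by
    rw [← hu, dotProduct_mulVec, ← vecMul_transpose, transpose_transpose]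
  have hlev : levScore M i = (M *ᵥ u) ⬝ᵥ (M *ᵥ u) := hdot u
  rw [hlev, show (M *ᵥ z) i = M i ⬝ᵥ z from rfl, hdot]
  simpa only [dotProduct, sq] using sum_mul_sq_le_sq_mul_sq univ (M *ᵥ u) (M *ᵥ z)

end Matrix

namespace Real

theorem sum_rpow_le_rpow_of_le_rpow_mul_sum {ι : Type*} [Fintype ι] {q : ℝ} (hq : 1 ≤ q)
    {w b : ι → ℝ} (hw : ∀ i, 0 < w i) (hb : ∀ i, 0 ≤ b i)
    (hbw : ∀ i, b i ≤ w i ^ (1 / q) * ∑ j, w j ^ (1 - 1 / q) * b j) :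
    ∑ i, b i ^ q ≤ (∑ j, w j ^ (1 - 1 / q) * b j) ^ q := by
  set S := ∑ j, w j ^ (1 - 1 / q) * b j
  have hS : 0 ≤ S := sum_nonneg fun j _ => mul_nonneg (rpow_nonneg (hw j).le _) (hb j)
  have hq1 : q - 1 + 1 ≠ 0 := by linarith
  have hpt : ∀ i, b i ^ q ≤ S ^ (q - 1) * (w i ^ (1 - 1 / q) * b i) := fun i =>
    calc b i ^ q = b i ^ (q - 1) * b i := by rw [← rpow_add_one' (hb i) hq1, sub_add_cancel]
      _ ≤ (w i ^ (1 / q) * S) ^ (q - 1) * b i :=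
        mul_le_mul_of_nonneg_right (rpow_le_rpow (hb i) (hbw i) (by linarith)) (hb i)
      _ = S ^ (q - 1) * (w i ^ (1 - 1 / q) * b i) := by
        rw [mul_rpow (rpow_nonneg (hw i).le _) hS, ← rpow_mul (hw i).le,
          show 1 / q * (q - 1) = 1 - 1 / q by field_simp]
        ring
  calc ∑ i, b i ^ q ≤ ∑ i, S ^ (q - 1) * (w i ^ (1 - 1 / q) * b i) := sum_le_sum fun i _ => hpt i
    _ = S ^ q := by rw [← mul_sum, ← rpow_add_one' hS hq1, sub_add_cancel]

theorem sum_mul_le_of_Lp_le_one {ι : Type*} (s : Finset ι) {r q : ℝ} (hrq : r.HolderConjugate q)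
    {v b : ι → ℝ} (hv : ∀ i ∈ s, 0 ≤ v i) (hb : ∀ i ∈ s, 0 ≤ b i)
    (hv1 : (∑ i ∈ s, v i ^ r) ^ (1 / r) ≤ 1) {S : ℝ} (hS : 0 ≤ S)
    (hbS : ∑ i ∈ s, b i ^ q ≤ S ^ q) : ∑ i ∈ s, v i * b i ≤ S := by
  have hbq : (∑ i ∈ s, b i ^ q) ^ (1 / q) ≤ S := by
    calc (∑ i ∈ s, b i ^ q) ^ (1 / q) ≤ (S ^ q) ^ (1 / q) :=
          rpow_le_rpow (sum_nonneg fun i hi => rpow_nonneg (hb i hi) _) hbS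
            (one_div_nonneg.mpr hrq.symm.nonneg)
      _ = S := by rw [one_div, rpow_rpow_inv hS hrq.symm.ne_zero]
  calc ∑ i ∈ s, v i * b i ≤ (∑ i ∈ s, v i ^ r) ^ (1 / r) * (∑ i ∈ s, b i ^ q) ^ (1 / q) :=
        inner_le_Lp_mul_Lq_of_nonneg s hrq hv hb
    _ ≤ 1 * S := mul_le_mul hv1 hbq (rpow_nonneg (sum_nonneg fun i hi => rpow_nonneg (hb i hi) _) _)
        zero_le_one
    _ = S := one_mul S

end Real

theorem sum_mul_sq_mulVec_le_of_levScore_le {N d : ℕ} {A : Matrix (Fin N) (Fin d) ℝ}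
    (hA : Function.Injective A.mulVec) {p : ℝ} (hp : 2 < p) {w : Fin N → ℝ} (hw : ∀ i, 0 < w i)
    (hσ : ∀ i, levScore (diagonal (fun j => w j ^ ((1:ℝ)/2 - 1/p)) * A) i ≤ w i)
    {v : Fin N → ℝ} (hv : ∀ i, 0 ≤ v i) (hvnorm : (∑ i, v i ^ (p / (p - 2))) ^ ((p - 2)/p) ≤ 1)
    (z : Fin d → ℝ) :
    ∑ i, v i * (A *ᵥ z) i ^ 2 ≤ ∑ i, w i ^ (1 - 2/p) * (A *ᵥ z) i ^ 2 := by
  set c : Fin N → ℝ := fun j => w j ^ ((1:ℝ)/2 - 1/p)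
  set M := diagonal c * A
  set S := ∑ i, w i ^ (1 - 2/p) * (A *ᵥ z) i ^ 2
  have hc : ∀ i, 0 < c i := fun i => rpow_pos_of_pos (hw i) _
  have hc2 : ∀ i, c i ^ 2 = w i ^ (1 - 2/p) := fun i => by
    rw [← rpow_natCast, ← rpow_mul (hw i).le]
    congr 1
    ring
  have hMx : ∀ x i, (M *ᵥ x) i = c i * (A *ᵥ x) i := fun x i => by
    rw [← mulVec_mulVec, mulVec_diagonal]
  have hMinj : Function.Injective M.mulVec := fun x y h =>
    hA (funext fun i => mul_left_cancel₀ (hc i).ne' (by rw [← hMx, ← hMx, h]))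
  have hMM : IsUnit (Mᵀ * M).det := by
    simpa using (PosDef.conjTranspose_mul_self M hMinj).det_pos.ne'.isUnit
  have hMz : (M *ᵥ z) ⬝ᵥ (M *ᵥ z) = S := by
    simp only [dotProduct, hMx]
    exact sum_congr rfl fun i _ => by rw [← hc2]; ring
  have hS : 0 ≤ S := by rw [← hMz]; exact dotProduct_self_star_nonneg _
  have hbound : ∀ i, (A *ᵥ z) i ^ 2 ≤ w i ^ (2/p) * S := fun i => by
    have hlev : c i ^ 2 * (A *ᵥ z) i ^ 2 ≤ c i ^ 2 * (w i ^ (2/p) * S) :=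
      calc c i ^ 2 * (A *ᵥ z) i ^ 2 = (M *ᵥ z) i ^ 2 := by rw [hMx]; ring
        _ ≤ levScore M i * S := hMz ▸ sq_mulVec_apply_le_levScore_mul hMM z i
        _ ≤ w i * S := mul_le_mul_of_nonneg_right (hσ i) hS
        _ = c i ^ 2 * (w i ^ (2/p) * S) := by
          rw [hc2, ← mul_assoc, ← rpow_add (hw i), sub_add_cancel, rpow_one]
    exact le_of_mul_le_mul_left hlev (pow_pos (hc i) 2)
  have hsum := sum_rpow_le_rpow_of_le_rpow_mul_sum (q := p/2) (by linarith) hw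
    (fun i => sq_nonneg ((A *ᵥ z) i)) (by simpa only [one_div_div] using hbound)
  rw [one_div_div] at hsum
  have hconj : (p / (p - 2)).HolderConjugate (p / 2) := by
    rw [holderConjugate_iff]
    constructor
    · rw [lt_div_iff₀ (by linarith)]; linarith
    · field_simp; ring
  exact sum_mul_le_of_Lp_le_one univ hconj (fun i _ => hv i) (fun i _ => sq_nonneg _)
    (by rwa [one_div_div]) hS hsum

theorem add_half_sum_mul_sq_le {m n : Type*} [Fintype m] [Fintype n] {A : Matrix m n ℝ}
    {Q : Matrix n n ℝ} (hQ : Q.IsSymm) {v : m → ℝ} (hv : ∀ i, 0 ≤ v i)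
    (hvQ : ∀ z, ∑ i, v i * (A *ᵥ z) i ^ 2 ≤ z ⬝ᵥ (Q *ᵥ z)) {g x y : n → ℝ} {c : ℝ}
    (hy : Q *ᵥ y = c • g) (hx : g ⬝ᵥ x = g ⬝ᵥ y) :
    y ⬝ᵥ (Q *ᵥ y) + 1/2 * ∑ i, v i * (A *ᵥ y) i ^ 2 ≤
      x ⬝ᵥ (Q *ᵥ x) + ∑ i, v i * (A *ᵥ x) i ^ 2 := by
  rw [hQ.dotProduct_mulVec_eq_add_of_mulVec_eq_smul hy hx]
  have hstep := hvQ (x - y)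
  have hsplit : 1/2 * ∑ i, v i * (A *ᵥ y) i ^ 2 ≤
      ∑ i, v i * (A *ᵥ x) i ^ 2 + ∑ i, v i * (A *ᵥ (x - y)) i ^ 2 := by
    rw [mul_sum, ← sum_add_distrib]
    refine sum_le_sum fun i _ => ?_
    rw [mulVec_sub, Pi.sub_apply]
    nlinarith [mul_nonneg (hv i) (sq_nonneg (2 * (A *ᵥ x) i - (A *ᵥ y) i))]
  linarith

theorem stmt6 {n d : ℕ} (A : Matrix (Fin n) (Fin d) ℝ) (hA : A.rank = d)
    (p : ℝ) (hp : 2 < p) (w : Fin n → ℝ) (hw : ∀ i, 0 < w i)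
    (hσ : ∀ i, levScore (Matrix.diagonal (fun j => w j ^ ((1:ℝ)/2 - 1/p)) * A) i ≤ w i)
    (D : Fin n → ℝ)
    (hD : (Matrix.diagonal D - Matrix.diagonal (fun i => w i ^ (1 - 2/p))).PosSemidef)
    (v : Fin n → ℝ) (hv : ∀ i, 0 ≤ v i)
    (hvnorm : (∑ i, v i ^ (p / (p - 2))) ^ ((p - 2)/p) ≤ 1)
    (g : Fin d → ℝ) (hg : g ≠ 0)
    (y : Fin d → ℝ)
    (hy : y = -(g ⬝ᵥ ((Aᵀ * Matrix.diagonal D * A)⁻¹ *ᵥ g))⁻¹ •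
      ((Aᵀ * Matrix.diagonal D * A)⁻¹ *ᵥ g)) :
    (1/2) * ∑ i, v i * ((A *ᵥ y) i) ^ 2 ≤
      sInf {E : ℝ | ∃ x : Fin d → ℝ, g ⬝ᵥ x = -1 ∧
          E = x ⬝ᵥ ((Aᵀ * (Matrix.diagonal D + Matrix.diagonal v) * A) *ᵥ x)} -
      sInf {E : ℝ | ∃ x : Fin d → ℝ, g ⬝ᵥ x = -1 ∧
          E = x ⬝ᵥ ((Aᵀ * Matrix.diagonal D * A) *ᵥ x)} := by
  set Q := Aᵀ * diagonal D * A
  have hAinj : Function.Injective A.mulVec := mulVec_injective_of_rank_eq_card (by simpa using hA)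
  have hwD : ∀ i, w i ^ (1 - 2/p) ≤ D i := fun i => by simpa using hD.diag_nonneg (i := i)
  have hQ : Q.PosDef := posDef_transpose_mul_diagonal_mul hAinj fun i =>
    (rpow_pos_of_pos (hw i) _).trans_le (hwD i)
  have hQsymm : Q.IsSymm := by simpa using hQ.isHermitian
  have hvQ : ∀ z, ∑ i, v i * (A *ᵥ z) i ^ 2 ≤ z ⬝ᵥ (Q *ᵥ z) := fun z => by
    rw [dotProduct_mulVec_transpose_mul_diagonal_mul_s6]
    exact (sum_mul_sq_mulVec_le_of_levScore_le hAinj hp hw hσ hv hvnorm z).trans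
      (sum_le_sum fun i _ => mul_le_mul_of_nonneg_right (hwD i) (sq_nonneg _))
  change y = constrainedMin Q g at hy
  have hgy : g ⬝ᵥ y = -1 := hy ▸ hQ.dotProduct_constrainedMin hg
  have hQy := hy ▸ mulVec_constrainedMin hQ.det_pos.ne'.isUnit g
  have hold : sInf {E : ℝ | ∃ x, g ⬝ᵥ x = -1 ∧ E = x ⬝ᵥ (Q *ᵥ x)} = y ⬝ᵥ (Q *ᵥ y) := by
    refine IsLeast.csInf_eq ⟨⟨y, hgy, rfl⟩, ?_⟩
    rintro _ ⟨x, hx, rfl⟩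
    rw [hQsymm.dotProduct_mulVec_eq_add_of_mulVec_eq_smul hQy (hx.trans hgy.symm)]
    exact le_add_of_nonneg_right (by simpa using hQ.posSemidef.dotProduct_mulVec_nonneg (x - y))
  have hnew : y ⬝ᵥ (Q *ᵥ y) + 1/2 * ∑ i, v i * (A *ᵥ y) i ^ 2 ≤
      sInf {E : ℝ | ∃ x, g ⬝ᵥ x = -1 ∧
        E = x ⬝ᵥ ((Aᵀ * (diagonal D + diagonal v) * A) *ᵥ x)} := by
    refine le_csInf ⟨_, y, hgy, rfl⟩ ?_
    rintro _ ⟨x, hx, rfl⟩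
    rw [Matrix.mul_add, Matrix.add_mul, add_mulVec, dotProduct_add,
      dotProduct_mulVec_transpose_mul_diagonal_mul_s6 A v]
    exact add_half_sum_mul_sq_le hQsymm hv hvQ hQy (hx.trans hgy.symm)
  rw [hold]
  linarith
end

section
/- Let α, β ≥ 1 be reals with 1/α + 1/β = 1. Then for every real n ≥ 0 and all reals x, y: |x + y|^n ≤ |αx|^n + |βy|^n. Moreover, for every real p ≥ 2 and all reals x, y: |x + y|^{p−2} ≤ e·|x|^{p−2} + p^{p−2}·|y|^{p−2}, where e is Euler's number. -/
/-!
If `a⁻¹ + b⁻¹ = 1`, then `|x| + |y| = a⁻¹ |a x| + b⁻¹ |b y|` is a convex combination, so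
`|x + y| ≤ max |a x| |b y|`, and raising to the power `n ≥ 0` bounds the maximum by the sum.
The second inequality is the case `a = p / (p - 1)`, `b = p`, `n = p - 2`, together with
`(p / (p - 1)) ^ (p - 2) ≤ exp ((p - 2) / (p - 1)) ≤ e`.
-/

open Real

lemma abs_add_le_max_of_holderConjugate {a b : ℝ} (hab : a.HolderConjugate b) (x y : ℝ) :
    |x + y| ≤ max |a * x| |b * y| := by
  have ha := hab.pos
  have hb := hab.symm.pos
  calc |x + y| ≤ |x| + |y| := abs_add_le x y
    _ = a⁻¹ * |a * x| + b⁻¹ * |b * y| := by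
      rw [abs_mul, abs_mul, abs_of_pos ha, abs_of_pos hb, inv_mul_cancel_left₀ ha.ne',
        inv_mul_cancel_left₀ hb.ne']
    _ ≤ a⁻¹ * max |a * x| |b * y| + b⁻¹ * max |a * x| |b * y| := by
      gcongr
      exacts [le_max_left _ _, le_max_right _ _]
    _ = max |a * x| |b * y| := by rw [← add_mul, hab.inv_add_inv_eq_one, one_mul]

lemma abs_add_rpow_le_of_holderConjugate {a b : ℝ} (hab : a.HolderConjugate b) {n : ℝ}
    (hn : 0 ≤ n) (x y : ℝ) : |x + y| ^ n ≤ |a * x| ^ n + |b * y| ^ n :=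
  calc |x + y| ^ n ≤ max |a * x| |b * y| ^ n :=
        rpow_le_rpow (abs_nonneg _) (abs_add_le_max_of_holderConjugate hab x y) hn
    _ = max (|a * x| ^ n) (|b * y| ^ n) := rpow_max (abs_nonneg _) (abs_nonneg _) hn
    _ ≤ |a * x| ^ n + |b * y| ^ n :=
        max_le_add_of_nonneg (rpow_nonneg (abs_nonneg _) n) (rpow_nonneg (abs_nonneg _) n)

lemma Real.one_add_rpow_le_exp_mul {x s : ℝ} (hx : -1 ≤ x) (hs : 0 ≤ s) :
    (1 + x) ^ s ≤ exp (x * s) := by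
  rw [exp_mul]
  exact rpow_le_rpow (by linarith) (by linarith [add_one_le_exp x]) hs

lemma Real.conjExponent_rpow_sub_two_le_exp_one {p : ℝ} (hp : 2 ≤ p) :
    conjExponent p ^ (p - 2) ≤ exp 1 := by
  have hp1 : 0 < p - 1 := by linarith
  have hconj : conjExponent p = 1 + (p - 1)⁻¹ := by
    rw [conjExponent]
    field_simp
    ring
  calc conjExponent p ^ (p - 2) ≤ exp ((p - 1)⁻¹ * (p - 2)) := by
        rw [hconj]
        exact one_add_rpow_le_exp_mul (by linarith [inv_pos.2 hp1]) (by linarith)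
    _ ≤ exp 1 := by
        rw [exp_le_exp, inv_mul_le_iff₀ hp1]
        linarith

theorem stmt8 (α β : ℝ) (hα : 1 ≤ α) (hβ : 1 ≤ β) (hconj : 1/α + 1/β = 1) :
    (∀ n : ℝ, 0 ≤ n → ∀ x y : ℝ, |x + y| ^ n ≤ |α * x| ^ n + |β * y| ^ n) ∧
    (∀ p : ℝ, 2 ≤ p → ∀ x y : ℝ,
      |x + y| ^ (p - 2) ≤
        Real.exp 1 * |x| ^ (p - 2) + p ^ (p - 2) * |y| ^ (p - 2)) := by
  constructor
  · have hα' : 1 < α := lt_of_le_of_ne hα <| by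
      rintro rfl
      norm_num at hconj
      linarith
    have hαβ : α.HolderConjugate β :=
      holderConjugate_iff.2 ⟨hα', by simpa only [one_div] using hconj⟩
    exact fun n hn x y ↦ abs_add_rpow_le_of_holderConjugate hαβ hn x y
  · intro p hp x y
    have hpq := (HolderConjugate.conjExponent (by linarith : 1 < p)).symm
    have h := abs_add_rpow_le_of_holderConjugate hpq (by linarith : 0 ≤ p - 2) x y
    rw [abs_mul, abs_mul, abs_of_pos hpq.pos, abs_of_pos hpq.symm.pos,
      mul_rpow hpq.pos.le (abs_nonneg x), mul_rpow hpq.symm.pos.le (abs_nonneg y)] at h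
    calc |x + y| ^ (p - 2)
        ≤ conjExponent p ^ (p - 2) * |x| ^ (p - 2) + p ^ (p - 2) * |y| ^ (p - 2) := h
      _ ≤ exp 1 * |x| ^ (p - 2) + p ^ (p - 2) * |y| ^ (p - 2) := by
        gcongr
        exact conjExponent_rpow_sub_two_le_exp_one hp
end

section
/- For all reals a, b ≥ 0 and every real k ≥ 2: (a+b)^k − a^k ≤ 3k·a^{k−1}b + 3k^k·b^k. -/
/-!
Put `c = 1 + 1/k`, so that `c ^ k ≤ e < 3`. If `a ≤ k b`, then `a + b ≤ c · k b`, whence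
`(a + b) ^ k ≤ 3 k ^ k b ^ k`. If `k b ≤ a`, the tangent bound for the convex function `t ↦ t ^ k`
gives `(a + b) ^ k - a ^ k ≤ k (a + b) ^ (k - 1) b`, and `a + b ≤ c a` bounds
`(a + b) ^ (k - 1)` by `3 a ^ (k - 1)`.
-/

open Real

namespace Real

lemma rpow_sub_rpow_le_mul_rpow_sub_one_mul {x y k : ℝ} (hx : 0 ≤ x) (hxy : x ≤ y) (hk : 1 ≤ k) :
    y ^ k - x ^ k ≤ k * y ^ (k - 1) * (y - x) := by
  obtain rfl | hy := (hx.trans hxy).eq_or_lt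
  · obtain rfl : x = 0 := le_antisymm hxy hx
    simp
  -- Bernoulli's inequality for `(x / y) ^ k = (1 + (x / y - 1)) ^ k`, multiplied by `y ^ k`.
  have hbern : 1 + k * (x / y - 1) ≤ (x / y) ^ k := by
    simpa using one_add_mul_self_le_rpow_one_add (s := x / y - 1) (by linarith [div_nonneg hx hy.le]) hk
  rw [div_rpow hx hy.le, le_div_iff₀ (rpow_pos_of_pos hy k)] at hbern
  have hyk : y ^ k = y ^ (k - 1) * y := by
    rw [← rpow_add_one hy.ne', sub_add_cancel]
  have : (1 + k * (x / y - 1)) * y ^ k = y ^ k + k * y ^ (k - 1) * (x - y) := by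
    rw [hyk]; field_simp
  linarith

lemma one_add_inv_rpow_le_exp_one {k : ℝ} (hk : 0 < k) : (1 + k⁻¹) ^ k ≤ exp 1 := calc
  (1 + k⁻¹) ^ k ≤ exp k⁻¹ ^ k := by
    gcongr
    linarith [add_one_le_exp k⁻¹]
  _ = exp 1 := by rw [← exp_mul, inv_mul_cancel₀ hk.ne']

lemma rpow_le_three_mul_rpow_of_le_add_div {x z k p : ℝ} (hx : 0 ≤ x) (hz : 0 ≤ z) (hk : 0 < k)
    (hzx : z ≤ x + x / k) (hp : 0 ≤ p) (hpk : p ≤ k) : z ^ p ≤ 3 * x ^ p := by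
  have hc : 1 ≤ 1 + k⁻¹ := by linarith [inv_pos.2 hk]
  calc z ^ p ≤ ((1 + k⁻¹) * x) ^ p := by
        gcongr
        linarith [div_eq_inv_mul x k]
    _ = (1 + k⁻¹) ^ p * x ^ p := mul_rpow (by linarith) hx
    _ ≤ 3 * x ^ p := by
        gcongr
        calc (1 + k⁻¹) ^ p ≤ (1 + k⁻¹) ^ k := rpow_le_rpow_of_exponent_le hc hpk
          _ ≤ exp 1 := one_add_inv_rpow_le_exp_one hk
          _ ≤ 3 := by linarith [exp_one_lt_d9]

end Real

theorem stmt9 (a b k : ℝ) (ha : 0 ≤ a) (hb : 0 ≤ b) (hk : 2 ≤ k) :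
    (a + b) ^ k - a ^ k ≤ 3 * k * a ^ (k - 1) * b + 3 * k ^ k * b ^ k := by
  have hk0 : 0 < k := by linarith
  have hab : 0 ≤ a + b := add_nonneg ha hb
  rcases le_total a (k * b) with hakb | hkba
  · have hmain : (a + b) ^ k ≤ 3 * k ^ k * b ^ k := by
      rw [mul_assoc, ← mul_rpow hk0.le hb]
      refine rpow_le_three_mul_rpow_of_le_add_div (by positivity) hab hk0 ?_ hk0.le le_rfl
      rw [mul_div_cancel_left₀ b hk0.ne']
      linarith
    have : 0 ≤ 3 * k * a ^ (k - 1) * b := by positivity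
    linarith [rpow_nonneg ha k]
  · have hpow : (a + b) ^ (k - 1) ≤ 3 * a ^ (k - 1) := by
      refine rpow_le_three_mul_rpow_of_le_add_div ha hab hk0 ?_ (by linarith) (by linarith)
      linarith [(le_div_iff₀' hk0).2 hkba]
    have htangent := rpow_sub_rpow_le_mul_rpow_sub_one_mul ha (le_add_of_nonneg_right hb)
      (by linarith : 1 ≤ k)
    rw [add_sub_cancel_left] at htangent
    have : k * (a + b) ^ (k - 1) * b ≤ k * (3 * a ^ (k - 1)) * b := by gcongr
    have : 0 ≤ 3 * k ^ k * b ^ k := by positivity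
    linarith
end

section
/- For all reals a, b ≥ 0 and every real k ≥ 1: (a+b)^k − a^k ≤ 4^k·(a^{k−1}b + b^k). -/
/-
Split according to which of `a`, `b` is larger. If `b ≤ a`, convexity of `x ↦ x ^ k` bounds the
increment `(a + b) ^ k - a ^ k` by `k (a + b) ^ (k - 1) b ≤ k 2 ^ (k - 1) a ^ (k - 1) b`, and
`k 2 ^ (k - 1) ≤ 4 ^ k` by Bernoulli's inequality. If `a ≤ b`, then already
`(a + b) ^ k ≤ (2 b) ^ k ≤ 4 ^ k b ^ k`.
-/

open Set

namespace Real

variable {x y k : ℝ}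

theorem rpow_sub_rpow_le_mul_rpow_sub_one_mul_sub (hy : 0 ≤ y) (hyx : y ≤ x) (hk : 1 ≤ k) :
    x ^ k - y ^ k ≤ k * x ^ (k - 1) * (x - y) := by
  rcases hyx.eq_or_lt with rfl | hlt
  · simp
  have hslope : slope (fun t : ℝ ↦ t ^ k) y x ≤ k * x ^ (k - 1) :=
    (convexOn_rpow hk).slope_le_of_hasDerivAt (mem_Ici.2 hy) (mem_Ici.2 (hy.trans hyx)) hlt
      (hasDerivAt_rpow_const (Or.inr hk))
  rw [slope_def_field, div_le_iff₀ (sub_pos.2 hlt)] at hslope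
  exact hslope

theorem mul_two_rpow_sub_one_le_four_rpow (hk : 1 ≤ k) : k * 2 ^ (k - 1) ≤ 4 ^ k := by
  have hbernoulli : 1 + k * 1 ≤ (1 + 1 : ℝ) ^ k :=
    one_add_mul_self_le_rpow_one_add (by norm_num) hk
  norm_num at hbernoulli
  calc k * 2 ^ (k - 1) ≤ 2 ^ k * 2 ^ k :=
        mul_le_mul (by linarith) (rpow_le_rpow_of_exponent_le (by norm_num) (by linarith))
          (by positivity) (by positivity)
    _ = 4 ^ k := by rw [← mul_rpow (by norm_num) (by norm_num)]; norm_num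

theorem add_rpow_sub_rpow_le_of_le {a b : ℝ} (hb : 0 ≤ b) (hba : b ≤ a) (hk : 1 ≤ k) :
    (a + b) ^ k - a ^ k ≤ 4 ^ k * (a ^ (k - 1) * b) := by
  have ha : 0 ≤ a := hb.trans hba
  have hincr := rpow_sub_rpow_le_mul_rpow_sub_one_mul_sub ha (le_add_of_nonneg_right hb) hk
  rw [add_sub_cancel_left] at hincr
  have hbase : (a + b) ^ (k - 1) ≤ 2 ^ (k - 1) * a ^ (k - 1) := by
    rw [← mul_rpow zero_le_two ha]
    exact rpow_le_rpow (by positivity) (by linarith) (by linarith)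
  calc (a + b) ^ k - a ^ k ≤ k * (a + b) ^ (k - 1) * b := hincr
    _ ≤ k * (2 ^ (k - 1) * a ^ (k - 1)) * b := by gcongr
    _ = k * 2 ^ (k - 1) * (a ^ (k - 1) * b) := by ring
    _ ≤ 4 ^ k * (a ^ (k - 1) * b) := by gcongr; exact mul_two_rpow_sub_one_le_four_rpow hk

theorem add_rpow_le_two_rpow_mul_of_le {a b : ℝ} (ha : 0 ≤ a) (hab : a ≤ b) (hk : 0 ≤ k) :
    (a + b) ^ k ≤ 2 ^ k * b ^ k := by
  rw [← mul_rpow zero_le_two (ha.trans hab)]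
  exact rpow_le_rpow (by linarith) (by linarith) hk

end Real

theorem stmt10 (a b k : ℝ) (ha : 0 ≤ a) (hb : 0 ≤ b) (hk : 1 ≤ k) :
    (a + b) ^ k - a ^ k ≤ (4:ℝ) ^ k * (a ^ (k - 1) * b + b ^ k) := by
  have hbk : 0 ≤ (4:ℝ) ^ k * b ^ k := by positivity
  have hak : 0 ≤ (4:ℝ) ^ k * (a ^ (k - 1) * b) := by positivity
  rw [mul_add]
  rcases le_total b a with hba | hab
  · linarith [Real.add_rpow_sub_rpow_le_of_le hb hba hk]
  · have h24 : (2:ℝ) ^ k * b ^ k ≤ 4 ^ k * b ^ k := by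
      gcongr; norm_num
    linarith [Real.add_rpow_le_two_rpow_mul_of_le ha hab (zero_le_one.trans hk),
      Real.rpow_nonneg ha k]
end

section
/- Let p ≥ 2, let A be a real n×d matrix of full column rank, b ∈ ℝ^n, and let w ∈ ℝ^n be strictly positive with w_i ≥ σ(W^{1/2−1/p}A)_i for all i, where W = diag(w). Set M = A^⊤W^{1−2/p}A and C_p = e·p^p. For u ∈ ℝ^d define H_f(u) = p(p−1)·A^⊤ diag(|Au−b|^{p−2}) A (the Hessian of x ↦ ‖Ax−b‖_p^p at u), and for x ≠ y define G(x,y) = pC_p‖x−y‖_M^{p−2} M + p(p−2)C_p‖x−y‖_M^{p−4} M(x−y)(x−y)^⊤M (the Hessian of x ↦ C_p‖x−y‖_M^p). Then for all x ≠ y in ℝ^d: (1/e)·(H_f(y) + G(x,y)) ⪯ H_f(x) + G(x,y) ⪯ e·(H_f(y) + G(x,y)) in the Loewner order. -/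
/-!
Cauchy–Schwarz in the `M`-norm together with the leverage-score bound gives the row estimate
`|(A (x - y))_i| ≤ w_i^{1/p} ‖x - y‖_M`. Feeding it into the scalar inequality
`|a + b|^q ≤ e |a|^q + (q + 1)^q |b|^q` with `q = p - 2` bounds the weights of `H_f(x)` entrywise,
whence `H_f(x) ⪯ e H_f(y) + p (p - 1)^{p-1} ‖x - y‖_M^{p-2} M`. As
`G(x, y) ⪰ p C_p ‖x - y‖_M^{p-2} M` and `(p - 1)^{p-1} ≤ (e - 1) C_p`, the error term is at most
`(e - 1) G(x, y)`, i.e. `H_f(x) + G ⪯ e (H_f(y) + G)`; exchanging `x` and `y` gives the lower bound.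
-/

open Matrix

open Real
open scoped MatrixOrder

lemma Real.one_add_inv_rpow_le_exp_one_s11 {q : ℝ} (hq : 0 < q) : (1 + q⁻¹) ^ q ≤ exp 1 :=
  calc (1 + q⁻¹) ^ q ≤ exp q⁻¹ ^ q :=
        rpow_le_rpow (by positivity) (by linarith [add_one_le_exp q⁻¹]) hq.le
    _ = exp 1 := by rw [← exp_mul, inv_mul_cancel₀ hq.ne']

lemma abs_add_rpow_le {q : ℝ} (hq : 0 ≤ q) (a b : ℝ) :
    |a + b| ^ q ≤ exp 1 * |a| ^ q + (q + 1) ^ q * |b| ^ q := by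
  rcases hq.eq_or_lt with rfl | hq
  · simp only [rpow_zero]
    linarith [add_one_le_exp (1 : ℝ)]
  have hmax : |a + b| ≤ max ((1 + q⁻¹) * |a|) ((q + 1) * |b|) := by
    refine (abs_add_le a b).trans ?_
    rcases le_or_gt (q * |b|) |a| with h | h
    · refine le_max_of_le_left ?_
      have : |b| ≤ q⁻¹ * |a| := by rwa [le_inv_mul_iff₀ hq]
      linarith
    · exact le_max_of_le_right (by linarith)
  have hx : 0 ≤ (1 + q⁻¹) * |a| := by positivity
  have hy : 0 ≤ (q + 1) * |b| := by positivity
  calc |a + b| ^ q ≤ (max ((1 + q⁻¹) * |a|) ((q + 1) * |b|)) ^ q :=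
        rpow_le_rpow (abs_nonneg _) hmax hq.le
    _ ≤ ((1 + q⁻¹) * |a|) ^ q + ((q + 1) * |b|) ^ q := by
        rcases max_cases ((1 + q⁻¹) * |a|) ((q + 1) * |b|) with ⟨h, -⟩ | ⟨h, -⟩ <;> rw [h]
        · linarith [rpow_nonneg hy q]
        · linarith [rpow_nonneg hx q]
    _ = (1 + q⁻¹) ^ q * |a| ^ q + (q + 1) ^ q * |b| ^ q := by
        rw [mul_rpow (by positivity) (abs_nonneg a), mul_rpow (by positivity) (abs_nonneg b)]
    _ ≤ exp 1 * |a| ^ q + (q + 1) ^ q * |b| ^ q := by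
        gcongr
        exact one_add_inv_rpow_le_exp_one_s11 hq

lemma abs_rpow_le_of_abs_sub_le {q a b δ : ℝ} (hq : 0 ≤ q) (h : |a - b| ≤ δ) :
    |a| ^ q ≤ exp 1 * |b| ^ q + (q + 1) ^ q * δ ^ q := by
  have hδ : |a - b| ^ q ≤ δ ^ q := rpow_le_rpow (abs_nonneg _) h hq
  have := abs_add_rpow_le hq b (a - b)
  rw [add_sub_cancel] at this
  nlinarith [rpow_nonneg (show (0 : ℝ) ≤ q + 1 by linarith) q]

lemma Matrix.PosDef.sq_dotProduct_le {k : Type*} [Fintype k] [DecidableEq k]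
    {M : Matrix k k ℝ} (hM : M.PosDef) (a u : k → ℝ) :
    (a ⬝ᵥ u) ^ 2 ≤ (a ⬝ᵥ M⁻¹ *ᵥ a) * (u ⬝ᵥ M *ᵥ u) := by
  have hMsymm : Mᵀ = M := by simpa using hM.isHermitian.eq
  have hinv : M⁻¹ * M = 1 := nonsing_inv_mul M ((isUnit_iff_isUnit_det M).1 hM.isUnit)
  have hinvsymm : (M⁻¹)ᵀ = M⁻¹ := by rw [transpose_nonsing_inv, hMsymm]
  have hcancel : M⁻¹ *ᵥ (M *ᵥ u) = u := by rw [mulVec_mulVec, hinv, one_mulVec]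
  have hdual : (M *ᵥ u) ⬝ᵥ M⁻¹ *ᵥ a = a ⬝ᵥ u := by
    rw [dotProduct_mulVec, ← hinvsymm, vecMul_transpose, hcancel, dotProduct_comm]
  have := (toBilin' M⁻¹).apply_mul_apply_le_of_forall_zero_le
    (fun x => by simpa [toBilin'_apply'] using hM.inv.posSemidef.dotProduct_mulVec_nonneg x)
    a (M *ᵥ u)
  simp only [toBilin'_apply', hcancel, hdual] at this
  rwa [dotProduct_comm (M *ᵥ u) u, ← sq] at this

lemma Matrix.mulVec_injective_of_rank_eq {m k : Type*} [Fintype k] (A : Matrix m k ℝ)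
    (hA : A.rank = Fintype.card k) : Function.Injective A.mulVec := by
  have hker : LinearMap.ker A.mulVecLin = ⊥ := by
    have := LinearMap.finrank_range_add_finrank_ker A.mulVecLin
    rw [Module.finrank_fintype_fun_eq_card] at this
    exact Submodule.finrank_eq_zero.mp (by rw [rank] at hA; omega)
  exact LinearMap.ker_eq_bot.mp hker

lemma Matrix.transpose_mul_diagonal_smul_add_smul_mul {m k : Type*} [Fintype m] [DecidableEq m]
    (A : Matrix m k ℝ) (a b : ℝ) (f g : m → ℝ) :
    Aᵀ * diagonal (a • f + b • g) * A = a • (Aᵀ * diagonal f * A) + b • (Aᵀ * diagonal g * A) := by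
  rw [show diagonal (a • f + b • g) = diagonal (a • f) + diagonal (b • g) from
    (diagonal_add _ _).symm, diagonal_smul, diagonal_smul, Matrix.mul_add, Matrix.add_mul,
    Matrix.mul_smul, Matrix.mul_smul, Matrix.smul_mul, Matrix.smul_mul]

section Gram

variable {m k : Type*} [Fintype m] [Fintype k] [DecidableEq m]

lemma Matrix.monotone_transpose_mul_diagonal_mul (A : Matrix m k ℝ) :
    Monotone fun c : m → ℝ => Aᵀ * diagonal c * A := fun c c' h => by
  rw [le_iff, ← Matrix.sub_mul, ← Matrix.mul_sub, diagonal_sub]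
  simpa using (posSemidef_diagonal_iff.2 fun i => sub_nonneg.2 (h i)).conjTranspose_mul_mul_same A

lemma Matrix.posDef_transpose_mul_diagonal_mul_s11 {A : Matrix m k ℝ} (hA : Function.Injective A.mulVec)
    {c : m → ℝ} (hc : ∀ i, 0 < c i) : (Aᵀ * diagonal c * A).PosDef := by
  simpa using (PosDef.diagonal hc).conjTranspose_mul_mul_same hA

lemma Matrix.transpose_mul_diagonal_abs_rpow_mul_le (A : Matrix m k ℝ) {q : ℝ} (hq : 0 ≤ q)
    {z z' δ : m → ℝ} (h : ∀ i, |z i - z' i| ≤ δ i) :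
    Aᵀ * diagonal (fun i => |z i| ^ q) * A ≤
      exp 1 • (Aᵀ * diagonal (fun i => |z' i| ^ q) * A) +
        (q + 1) ^ q • (Aᵀ * diagonal (fun i => δ i ^ q) * A) := by
  have hweights : (fun i => |z i| ^ q) ≤
      exp 1 • (fun i => |z' i| ^ q) + (q + 1) ^ q • fun i => δ i ^ q :=
    fun i => abs_rpow_le_of_abs_sub_le hq (h i)
  exact (monotone_transpose_mul_diagonal_mul A hweights).trans_eq
    (transpose_mul_diagonal_smul_add_smul_mul A _ _ _ _)

end Gram

lemma Matrix.posSemidef_vecMulVec_mulVec_vecMul {k : Type*} [Fintype k] {M : Matrix k k ℝ}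
    (hM : Mᵀ = M) (u : k → ℝ) : (vecMulVec (M *ᵥ u) (u ᵥ* M)).PosSemidef := by
  simpa [← vecMul_transpose, hM] using posSemidef_vecMulVec_self_star (M *ᵥ u)

lemma levScore_diagonal_mul {n d : ℕ} (s : Fin n → ℝ) (A : Matrix (Fin n) (Fin d) ℝ) (i : Fin n) :
    levScore (diagonal s * A) i =
      s i ^ 2 * (A i ⬝ᵥ (Aᵀ * diagonal (fun j => s j ^ 2) * A)⁻¹ *ᵥ A i) := by
  have hgram : (diagonal s * A)ᵀ * (diagonal s * A) = Aᵀ * diagonal (fun j => s j ^ 2) * A := by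
    rw [transpose_mul, diagonal_transpose, Matrix.mul_assoc, ← Matrix.mul_assoc (diagonal s),
      diagonal_mul_diagonal, ← Matrix.mul_assoc]
    simp only [sq]
  have hrow : (diagonal s * A) i = s i • A i := by ext j; simp [diagonal_mul]
  rw [levScore, hgram, hrow, smul_dotProduct, mulVec_smul, dotProduct_smul, smul_eq_mul,
    smul_eq_mul, ← mul_assoc, sq]

lemma abs_mulVec_apply_le_of_levScore_le {n d : ℕ} {A : Matrix (Fin n) (Fin d) ℝ}
    (hA : A.rank = d) {p : ℝ} {w : Fin n → ℝ} (hw : ∀ i, 0 < w i)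
    (hσ : ∀ i, levScore (diagonal (fun j => w j ^ ((1 : ℝ) / 2 - 1 / p)) * A) i ≤ w i)
    (u : Fin d → ℝ) (i : Fin n) :
    |(A *ᵥ u) i| ≤
      w i ^ (1 / p) * √(u ⬝ᵥ (Aᵀ * diagonal (fun j => w j ^ (1 - 2 / p)) * A) *ᵥ u) := by
  set M := Aᵀ * diagonal (fun j => w j ^ (1 - 2 / p)) * A
  have hMpd : M.PosDef := posDef_transpose_mul_diagonal_mul_s11
    (A.mulVec_injective_of_rank_eq (by simpa using hA)) fun j => rpow_pos_of_pos (hw j) _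
  have hsq : ∀ j, (w j ^ ((1 : ℝ) / 2 - 1 / p)) ^ 2 = w j ^ (1 - 2 / p) := fun j => by
    rw [← rpow_mul_natCast (hw j).le]
    ring_nf
  have hσM : w i ^ (1 - 2 / p) * (A i ⬝ᵥ M⁻¹ *ᵥ A i) ≤ w i ^ (2 / p) * w i ^ (1 - 2 / p) := by
    rw [← rpow_add (hw i), add_sub_cancel, rpow_one]
    simpa only [levScore_diagonal_mul, hsq] using hσ i
  have hlev : A i ⬝ᵥ M⁻¹ *ᵥ A i ≤ w i ^ (2 / p) := by
    rw [mul_comm (w i ^ (2 / p))] at hσM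
    exact le_of_mul_le_mul_left hσM (rpow_pos_of_pos (hw i) _)
  calc |(A *ᵥ u) i| ≤ √((A i ⬝ᵥ M⁻¹ *ᵥ A i) * (u ⬝ᵥ M *ᵥ u)) :=
        abs_le_sqrt (hMpd.sq_dotProduct_le (A i) u)
    _ ≤ √(w i ^ (2 / p) * (u ⬝ᵥ M *ᵥ u)) := by
        gcongr
        simpa using hMpd.posSemidef.dotProduct_mulVec_nonneg u
    _ = w i ^ (1 / p) * √(u ⬝ᵥ M *ᵥ u) := by
        rw [sqrt_mul (rpow_nonneg (hw i).le _), sqrt_eq_rpow, ← rpow_mul (hw i).le]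
        ring_nf

lemma sub_one_mul_sub_one_rpow_le_exp_mul {p : ℝ} (hp : 2 ≤ p) :
    (p - 1) * (p - 1) ^ (p - 2) ≤ (exp 1 - 1) * (exp 1 * p ^ p) := by
  have he : 2 ≤ exp 1 := by linarith [add_one_le_exp (1 : ℝ)]
  have hP : 0 ≤ p ^ p := rpow_nonneg (by linarith) _
  have he' : 1 ≤ (exp 1 - 1) * exp 1 := by nlinarith
  calc (p - 1) * (p - 1) ^ (p - 2) ≤ p ^ 2 * p ^ (p - 2) :=
        mul_le_mul (by nlinarith) (rpow_le_rpow (by linarith) (by linarith) (by linarith))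
          (rpow_nonneg (by linarith) _) (by positivity)
    _ = p ^ p := by rw [← rpow_natCast, ← rpow_add (by linarith)]; norm_num
    _ ≤ (exp 1 - 1) * (exp 1 * p ^ p) := by nlinarith [mul_le_mul_of_nonneg_right he' hP]

lemma hessian_add_le_exp_smul {m k : Type*} [Fintype m] [Fintype k] [DecidableEq m]
    (A : Matrix m k ℝ) {p r : ℝ} (hp : 2 ≤ p) (hr : 0 ≤ r) {w z z' : m → ℝ} (hw : ∀ i, 0 < w i)
    (hzz' : ∀ i, |z i - z' i| ≤ w i ^ (1 / p) * r) {G : Matrix k k ℝ}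
    (hG : (p * (exp 1 * p ^ p) * r ^ (p - 2)) • (Aᵀ * diagonal (fun i => w i ^ (1 - 2 / p)) * A)
      ≤ G) :
    (p * (p - 1)) • (Aᵀ * diagonal (fun i => |z i| ^ (p - 2)) * A) + G ≤
      exp 1 • ((p * (p - 1)) • (Aᵀ * diagonal (fun i => |z' i| ^ (p - 2)) * A) + G) := by
  set M := Aᵀ * diagonal (fun i => w i ^ (1 - 2 / p)) * A
  set H := fun v : m → ℝ => Aᵀ * diagonal (fun i => |v i| ^ (p - 2)) * A
  set c := p * (p - 1)
  set s := r ^ (p - 2)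
  have he : 1 ≤ exp 1 := by linarith [add_one_le_exp (1 : ℝ)]
  have hM0 : 0 ≤ M := by
    simpa using (monotone_transpose_mul_diagonal_mul A) (fun i => (rpow_pos_of_pos (hw i) _).le)
  have hδ : Aᵀ * diagonal (fun i => (w i ^ (1 / p) * r) ^ (p - 2)) * A = s • M := by
    have hweight : (fun i => (w i ^ (1 / p) * r) ^ (p - 2)) =
        s • fun i => w i ^ (1 - 2 / p) := funext fun i => by
      rw [Pi.smul_apply, smul_eq_mul, mul_rpow (rpow_nonneg (hw i).le _) hr, ← rpow_mul (hw i).le,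
        mul_comm]
      congr 2
      field_simp
    rw [hweight, diagonal_smul, Matrix.mul_smul, Matrix.smul_mul]
  have hH : H z ≤ exp 1 • H z' + (p - 1) ^ (p - 2) • s • M := by
    have := transpose_mul_diagonal_abs_rpow_mul_le A (q := p - 2) (by linarith) hzz'
    rwa [hδ, show p - 2 + 1 = p - 1 by ring] at this
  have hcoef : c * (p - 1) ^ (p - 2) ≤ (exp 1 - 1) * (p * (exp 1 * p ^ p)) := by
    have := mul_le_mul_of_nonneg_left (sub_one_mul_sub_one_rpow_le_exp_mul hp)
      (show 0 ≤ p by linarith)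
    linarith
  have hHG : c • H z ≤ exp 1 • (c • H z') + (exp 1 - 1) • G :=
    calc c • H z ≤ c • (exp 1 • H z' + (p - 1) ^ (p - 2) • s • M) :=
          smul_le_smul_of_nonneg_left hH (mul_nonneg (by linarith) (by linarith))
      _ = exp 1 • (c • H z') + (c * (p - 1) ^ (p - 2)) • s • M := by module
      _ ≤ exp 1 • (c • H z') + ((exp 1 - 1) * (p * (exp 1 * p ^ p))) • s • M := by
          gcongr _ + ?_
          exact smul_le_smul_of_nonneg_right hcoef (smul_nonneg (rpow_nonneg hr _) hM0)
      _ = exp 1 • (c • H z') + (exp 1 - 1) • ((p * (exp 1 * p ^ p) * s) • M) := by module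
      _ ≤ exp 1 • (c • H z') + (exp 1 - 1) • G := by gcongr
  calc c • H z + G ≤ exp 1 • (c • H z') + (exp 1 - 1) • G + G := by gcongr
    _ = exp 1 • (c • H z' + G) := by module

theorem stmt11_general {n d : ℕ} (A : Matrix (Fin n) (Fin d) ℝ) (hA : A.rank = d)
    (b : Fin n → ℝ) (p : ℝ) (hp : 2 ≤ p)
    (w : Fin n → ℝ) (hw : ∀ i, 0 < w i)
    (hσ : ∀ i, levScore (Matrix.diagonal (fun j => w j ^ ((1:ℝ)/2 - 1/p)) * A) i ≤ w i)
    (M : Matrix (Fin d) (Fin d) ℝ)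
    (hM : M = Aᵀ * Matrix.diagonal (fun i => w i ^ (1 - 2/p)) * A)
    (Cp : ℝ) (hCp : Cp = Real.exp 1 * p ^ p)
    (Hf : (Fin d → ℝ) → Matrix (Fin d) (Fin d) ℝ)
    (hHf : ∀ u, Hf u =
      (p * (p - 1)) • (Aᵀ * Matrix.diagonal (fun i => |(A *ᵥ u - b) i| ^ (p - 2)) * A))
    (G : (Fin d → ℝ) → (Fin d → ℝ) → Matrix (Fin d) (Fin d) ℝ)
    (hG : ∀ x y, G x y =
      (p * Cp * Real.sqrt ((x - y) ⬝ᵥ (M *ᵥ (x - y))) ^ (p - 2)) • M +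
      (p * (p - 2) * Cp * Real.sqrt ((x - y) ⬝ᵥ (M *ᵥ (x - y))) ^ (p - 4)) •
        Matrix.vecMulVec (M *ᵥ (x - y)) ((x - y) ᵥ* M))
    (x y : Fin d → ℝ) :
    ((Hf x + G x y) - (Real.exp 1)⁻¹ • (Hf y + G x y)).PosSemidef ∧
    (Real.exp 1 • (Hf y + G x y) - (Hf x + G x y)).PosSemidef := by
  set r := √((x - y) ⬝ᵥ (M *ᵥ (x - y)))
  have hMsymm : Mᵀ = M := by rw [hM]; simp [Matrix.mul_assoc]
  have hGM : (p * Cp * r ^ (p - 2)) • M ≤ G x y := by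
    rw [hG x y]
    refine le_add_of_nonneg_right
      (smul_nonneg ?_ (posSemidef_vecMulVec_mulVec_vecMul hMsymm _).nonneg)
    have hr4 : 0 ≤ r ^ (p - 4) := rpow_nonneg (sqrt_nonneg _) _
    have hCp0 : 0 ≤ Cp := by rw [hCp]; positivity
    have hp2 : 0 ≤ p - 2 := by linarith
    positivity
  have hres : ∀ i, |(A *ᵥ x - b) i - (A *ᵥ y - b) i| ≤ w i ^ (1 / p) * r := fun i => by
    have := abs_mulVec_apply_le_of_levScore_le hA hw hσ (x - y) i
    rwa [← hM, mulVec_sub, Pi.sub_apply, ← sub_sub_sub_cancel_right _ _ (b i)] at this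
  subst hM hCp
  have hxy := hessian_add_le_exp_smul A hp (sqrt_nonneg _) hw hres hGM
  have hyx := hessian_add_le_exp_smul A hp (sqrt_nonneg _) hw
    (fun i => (abs_sub_comm _ _).trans_le (hres i)) hGM
  rw [← hHf, ← hHf] at hxy hyx
  refine ⟨le_iff.1 ?_, le_iff.1 hxy⟩
  simpa using smul_le_smul_of_nonneg_left hyx (inv_nonneg.2 (exp_pos 1).le)

theorem stmt11 {n d : ℕ} (A : Matrix (Fin n) (Fin d) ℝ) (hA : A.rank = d)
    (b : Fin n → ℝ) (p : ℝ) (hp : 2 ≤ p)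
    (w : Fin n → ℝ) (hw : ∀ i, 0 < w i)
    (hσ : ∀ i, levScore (Matrix.diagonal (fun j => w j ^ ((1:ℝ)/2 - 1/p)) * A) i ≤ w i)
    (M : Matrix (Fin d) (Fin d) ℝ)
    (hM : M = Aᵀ * Matrix.diagonal (fun i => w i ^ (1 - 2/p)) * A)
    (Cp : ℝ) (hCp : Cp = Real.exp 1 * p ^ p)
    (Hf : (Fin d → ℝ) → Matrix (Fin d) (Fin d) ℝ)
    (hHf : ∀ u, Hf u =
      (p * (p - 1)) • (Aᵀ * Matrix.diagonal (fun i => |(A *ᵥ u - b) i| ^ (p - 2)) * A))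
    (G : (Fin d → ℝ) → (Fin d → ℝ) → Matrix (Fin d) (Fin d) ℝ)
    (hG : ∀ x y, G x y =
      (p * Cp * Real.sqrt ((x - y) ⬝ᵥ (M *ᵥ (x - y))) ^ (p - 2)) • M +
      (p * (p - 2) * Cp * Real.sqrt ((x - y) ⬝ᵥ (M *ᵥ (x - y))) ^ (p - 4)) •
        Matrix.vecMulVec (M *ᵥ (x - y)) ((x - y) ᵥ* M))
    (x y : Fin d → ℝ) (hxy : x ≠ y) :
    ((Hf x + G x y) - (Real.exp 1)⁻¹ • (Hf y + G x y)).PosSemidef ∧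
    (Real.exp 1 • (Hf y + G x y) - (Hf x + G x y)).PosSemidef :=
  stmt11_general A hA b p hp w hw hσ M hM Cp hCp Hf hHf G hG x y
end

section
/- Let p ≥ 2, let A be a real n×d matrix of full column rank, b ∈ ℝ^n, and let w ∈ ℝ^n be strictly positive with w_i ≥ σ(W^{1/2−1/p}A)_i for all i, where W = diag(w). Set M = A^⊤W^{1−2/p}A. Then for all x, y, z ∈ ℝ^d: p(p−1)·Σ_{i∈[n]} |(Ax−b)_i|^{p−2}(Az)_i^2 ≤ e·p(p−1)·Σ_{i∈[n]} |(Ay−b)_i|^{p−2}(Az)_i^2 + p^p·‖x−y‖_M^{p−2}·‖z‖_M^2. -/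
/-!
With `t = p - 2`, the scalar inequality `|u|^t ≤ e |v|^t + (t+1)^t |u - v|^t` holds
(split on `|u| ≤ (1 + 1/t) |v|` and use `(1 + 1/t)^t ≤ e`). For `N = W^{1/2-1/p} A` one has
`M = NᵀN`, and Cauchy–Schwarz in the `M`-inner product gives
`(N_i ⬝ u)^2 ≤ σ(N)_i ‖u‖_M^2 ≤ w_i ‖u‖_M^2`, i.e. `|(Au)_i| ≤ w_i^{1/p} ‖u‖_M`. Hence
`|(A(x-y))_i|^{p-2} ≤ w_i^{1-2/p} ‖x-y‖_M^{p-2}`, and summing against `(Az)_i^2` produces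
`‖z‖_M^2 = ∑ w_i^{1-2/p} (Az)_i^2`; finally `p(p-1)(p-1)^{p-2} ≤ p^p`.
-/

open Matrix

namespace Real

theorem one_add_inv_rpow_le_exp_one_s12 {t : ℝ} (ht : 0 < t) : (1 + t⁻¹) ^ t ≤ exp 1 := by
  calc (1 + t⁻¹) ^ t ≤ exp t⁻¹ ^ t := by
        gcongr
        linarith [add_one_le_exp t⁻¹]
    _ = exp 1 := by rw [← exp_mul, inv_mul_cancel₀ ht.ne']

theorem rpow_le_exp_one_mul_rpow_add_rpow {a b c t : ℝ} (ha : 0 ≤ a) (hb : 0 ≤ b) (hc : 0 ≤ c)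
    (ht : 0 ≤ t) (habc : a ≤ b + c) : a ^ t ≤ exp 1 * b ^ t + (t + 1) ^ t * c ^ t := by
  rcases ht.eq_or_lt with rfl | ht
  · simp only [rpow_zero, mul_one, zero_add]
    linarith [add_one_le_exp 1]
  by_cases hab : a ≤ b * (1 + t⁻¹)
  · have : a ^ t ≤ exp 1 * b ^ t :=
      calc a ^ t ≤ (b * (1 + t⁻¹)) ^ t := by gcongr
        _ = b ^ t * (1 + t⁻¹) ^ t := mul_rpow hb (by positivity)
        _ ≤ b ^ t * exp 1 := by gcongr; exact one_add_inv_rpow_le_exp_one_s12 ht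
        _ = exp 1 * b ^ t := mul_comm _ _
    have : 0 ≤ (t + 1) ^ t * c ^ t := by positivity
    linarith
  · -- otherwise `b < a t / (t + 1)`, so `c ≥ a - b > a / (t + 1)`
    have hac : a ≤ (t + 1) * c := by
      have : b * (1 + t) < a * t := by
        have := mul_lt_mul_of_pos_right (not_le.mp hab) ht
        rwa [mul_assoc, add_mul, inv_mul_cancel₀ ht.ne', one_mul, add_comm] at this
      nlinarith
    have : a ^ t ≤ (t + 1) ^ t * c ^ t := by
      rw [← mul_rpow (by linarith) hc]; gcongr
    have : 0 ≤ exp 1 * b ^ t := by positivity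
    linarith

theorem abs_rpow_le_exp_one_mul_abs_rpow_add (u v : ℝ) {t : ℝ} (ht : 0 ≤ t) :
    |u| ^ t ≤ exp 1 * |v| ^ t + (t + 1) ^ t * |u - v| ^ t :=
  rpow_le_exp_one_mul_rpow_add_rpow (abs_nonneg _) (abs_nonneg _) (abs_nonneg _) ht
    (by simpa using abs_add_le v (u - v))

theorem mul_sub_one_mul_rpow_le_rpow {p : ℝ} (hp : 1 < p) :
    p * (p - 1) * (p - 1) ^ (p - 2) ≤ p ^ p := by
  calc p * (p - 1) * (p - 1) ^ (p - 2) = p * (p - 1) ^ (p - 1) := by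
        rw [mul_assoc, mul_comm (p - 1), ← rpow_add_one (by linarith)]; ring_nf
    _ ≤ p * p ^ (p - 1) := by gcongr; linarith
    _ = p ^ p := by rw [mul_comm, ← rpow_add_one (by linarith)]; ring_nf

theorem abs_rpow_sub_two_le_of_sq_le {p w s Q : ℝ} (hp : 2 ≤ p) (hw : 0 < w)
    (h : (w ^ ((1:ℝ)/2 - 1/p) * s) ^ 2 ≤ w * Q) :
    |s| ^ (p - 2) ≤ w ^ (1 - 2/p) * √Q ^ (p - 2) := by
  have hwa : 0 < w ^ ((1:ℝ)/2 - 1/p) := rpow_pos_of_pos hw _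
  have hs : |s| ≤ w ^ (1/p) * √Q := by
    refine le_of_mul_le_mul_left ?_ hwa
    calc w ^ ((1:ℝ)/2 - 1/p) * |s| ≤ √(w * Q) := by
          rw [← abs_of_pos hwa, ← abs_mul]; exact abs_le_sqrt h
      _ = w ^ ((1:ℝ)/2 - 1/p) * (w ^ (1/p) * √Q) := by
          rw [sqrt_mul hw.le, sqrt_eq_rpow, ← mul_assoc, ← rpow_add hw]
          ring_nf
  calc |s| ^ (p - 2) ≤ (w ^ (1/p) * √Q) ^ (p - 2) := by gcongr
    _ = w ^ (1 - 2/p) * √Q ^ (p - 2) := by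
      rw [mul_rpow (by positivity) (by positivity), ← rpow_mul hw.le]
      congr 2
      field_simp

theorem sum_abs_rpow_mul_sq_le {ι : Type*} [Fintype ι] {t K : ℝ} (ht : 0 ≤ t)
    (u v c W : ι → ℝ) (h : ∀ i, |u i - v i| ^ t ≤ W i * K) :
    ∑ i, |u i| ^ t * c i ^ 2 ≤
      exp 1 * ∑ i, |v i| ^ t * c i ^ 2 + (t + 1) ^ t * K * ∑ i, W i * c i ^ 2 := by
  rw [Finset.mul_sum, Finset.mul_sum, ← Finset.sum_add_distrib]
  refine Finset.sum_le_sum fun i _ => ?_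
  have := abs_rpow_le_exp_one_mul_abs_rpow_add (u i) (v i) ht
  have := mul_le_mul_of_nonneg_left (h i) (by positivity : (0:ℝ) ≤ (t + 1) ^ t)
  nlinarith [sq_nonneg (c i)]

end Real

namespace Matrix

section

variable {m n R : Type*} [Fintype m]

theorem dotProduct_transpose_mul_self_mulVec [Fintype n] [CommSemiring R] (N : Matrix m n R)
    (u v : n → R) :
    u ⬝ᵥ (Nᵀ * N) *ᵥ v = N *ᵥ u ⬝ᵥ N *ᵥ v := by
  rw [← mulVec_mulVec, dotProduct_mulVec, vecMul_transpose]

theorem transpose_diagonal_mul_mul_diagonal_mul [CommSemiring R] [DecidableEq m]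
    (c : m → R) (A : Matrix m n R) :
    (diagonal c * A)ᵀ * (diagonal c * A) = Aᵀ * diagonal (c * c) * A := by
  rw [transpose_mul, diagonal_transpose, Matrix.mul_assoc, ← Matrix.mul_assoc (diagonal c),
    diagonal_mul_diagonal', ← Matrix.mul_assoc]
  rfl

theorem dotProduct_transpose_mul_diagonal_mul_mulVec [Fintype n] [CommSemiring R] [DecidableEq m]
    (A : Matrix m n R) (c : m → R) (u : n → R) :
    u ⬝ᵥ (Aᵀ * diagonal c * A) *ᵥ u = ∑ i, c i * (A *ᵥ u) i ^ 2 := by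
  rw [← mulVec_mulVec, ← mulVec_mulVec, dotProduct_mulVec, vecMul_transpose]
  exact Finset.sum_congr rfl fun i _ => by rw [mulVec_diagonal]; ring

theorem isUnit_det_transpose_mul_self_of_rank_eq [Fintype n] [Field R] [LinearOrder R]
    [IsStrictOrderedRing R] [DecidableEq n] {N : Matrix m n R} (hN : N.rank = Fintype.card n) :
    IsUnit (Nᵀ * N).det := by
  rw [← isUnit_iff_isUnit_det, ← linearIndependent_cols_iff_isUnit,
    linearIndependent_iff_card_eq_finrank_span, Set.finrank, ← rank_eq_finrank_span_cols,
    rank_transpose_mul_self, hN]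

end

variable {n d : ℕ}

theorem sq_dotProduct_le_levScore_mul {N : Matrix (Fin n) (Fin d) ℝ} (hN : IsUnit (Nᵀ * N).det)
    (i : Fin n) (u : Fin d → ℝ) : (N i ⬝ᵥ u) ^ 2 ≤ levScore N i * (u ⬝ᵥ (Nᵀ * N) *ᵥ u) := by
  set c := (Nᵀ * N)⁻¹ *ᵥ N i
  -- Cauchy–Schwarz for `N c` and `N u`, since `N i = (Nᵀ N) c`
  have hc : (Nᵀ * N) *ᵥ c = N i := by rw [mulVec_mulVec, mul_nonsing_inv _ hN, one_mulVec]
  have hrow : N i ⬝ᵥ u = N *ᵥ c ⬝ᵥ N *ᵥ u := by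
    rw [← hc, dotProduct_comm, dotProduct_transpose_mul_self_mulVec, dotProduct_comm]
  have hlev : levScore N i = N *ᵥ c ⬝ᵥ N *ᵥ c := by
    rw [levScore, ← dotProduct_transpose_mul_self_mulVec, hc, dotProduct_comm]
  rw [hrow, hlev, dotProduct_transpose_mul_self_mulVec]
  simpa only [dotProduct, sq] using Finset.sum_mul_sq_le_sq_mul_sq Finset.univ (N *ᵥ c) (N *ᵥ u)

theorem abs_mulVec_rpow_le_of_levScore_le {A : Matrix (Fin n) (Fin d) ℝ} (hA : A.rank = d)
    {p : ℝ} (hp : 2 ≤ p) {w : Fin n → ℝ} (hw : ∀ i, 0 < w i)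
    (hσ : ∀ i, levScore (diagonal (fun j => w j ^ ((1:ℝ)/2 - 1/p)) * A) i ≤ w i)
    {M : Matrix (Fin d) (Fin d) ℝ} (hM : M = Aᵀ * diagonal (fun i => w i ^ (1 - 2/p)) * A)
    (u : Fin d → ℝ) (i : Fin n) :
    |(A *ᵥ u) i| ^ (p - 2) ≤ w i ^ (1 - 2/p) * √(u ⬝ᵥ M *ᵥ u) ^ (p - 2) := by
  set c : Fin n → ℝ := fun j => w j ^ ((1:ℝ)/2 - 1/p)
  set N := diagonal c * A
  have hMN : M = Nᵀ * N := by
    rw [hM, transpose_diagonal_mul_mul_diagonal_mul]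
    congr; ext j; rw [Pi.mul_apply, ← Real.rpow_add (hw j)]; ring_nf
  have hN : IsUnit (Nᵀ * N).det := by
    refine isUnit_det_transpose_mul_self_of_rank_eq ?_
    rw [rank_mul_eq_right_of_isUnit_det _ _ ?_, hA, Fintype.card_fin]
    simp [det_diagonal, Finset.prod_ne_zero_iff, c, (Real.rpow_pos_of_pos (hw _) _).ne']
  have hM0 : 0 ≤ u ⬝ᵥ M *ᵥ u := by
    rw [hMN, dotProduct_transpose_mul_self_mulVec]; exact dotProduct_self_star_nonneg _
  have hNu : (N *ᵥ u) i = c i * (A *ᵥ u) i := by rw [← mulVec_mulVec, mulVec_diagonal]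
  refine Real.abs_rpow_sub_two_le_of_sq_le hp (hw i) ?_
  rw [← hNu, hMN]
  exact (sq_dotProduct_le_levScore_mul hN i u).trans
    (mul_le_mul_of_nonneg_right (hσ i) (hMN ▸ hM0))

end Matrix

theorem stmt12 {n d : ℕ} (A : Matrix (Fin n) (Fin d) ℝ) (hA : A.rank = d)
    (b : Fin n → ℝ) (p : ℝ) (hp : 2 ≤ p)
    (w : Fin n → ℝ) (hw : ∀ i, 0 < w i)
    (hσ : ∀ i, levScore (Matrix.diagonal (fun j => w j ^ ((1:ℝ)/2 - 1/p)) * A) i ≤ w i)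
    (M : Matrix (Fin d) (Fin d) ℝ)
    (hM : M = Aᵀ * Matrix.diagonal (fun i => w i ^ (1 - 2/p)) * A)
    (x y z : Fin d → ℝ) :
    p * (p - 1) * ∑ i, |(A *ᵥ x - b) i| ^ (p - 2) * ((A *ᵥ z) i) ^ 2 ≤
      Real.exp 1 * (p * (p - 1)) * ∑ i, |(A *ᵥ y - b) i| ^ (p - 2) * ((A *ᵥ z) i) ^ 2 +
      p ^ p * Real.sqrt ((x - y) ⬝ᵥ (M *ᵥ (x - y))) ^ (p - 2) * (z ⬝ᵥ (M *ᵥ z)) := by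
  have hdiff : ∀ i, |(A *ᵥ x - b) i - (A *ᵥ y - b) i| ^ (p - 2) ≤
      w i ^ (1 - 2/p) * √((x - y) ⬝ᵥ M *ᵥ (x - y)) ^ (p - 2) := fun i => by
    simpa only [mulVec_sub, Pi.sub_apply, sub_sub_sub_cancel_right] using
      abs_mulVec_rpow_le_of_levScore_le hA hp hw hσ hM (x - y) i
  have hz : z ⬝ᵥ M *ᵥ z = ∑ i, w i ^ (1 - 2/p) * (A *ᵥ z) i ^ 2 :=
    hM ▸ dotProduct_transpose_mul_diagonal_mul_mulVec A _ z
  have hsum := Real.sum_abs_rpow_mul_sq_le (by linarith) _ _ (A *ᵥ z) _ hdiff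
  rw [← hz, show p - 2 + 1 = p - 1 by ring] at hsum
  have hK : 0 ≤ √((x - y) ⬝ᵥ M *ᵥ (x - y)) ^ (p - 2) * (z ⬝ᵥ M *ᵥ z) := by
    rw [hz]
    exact mul_nonneg (by positivity) (Finset.sum_nonneg fun i _ =>
      mul_nonneg (Real.rpow_nonneg (hw i).le _) (sq_nonneg _))
  have hcoef := Real.mul_sub_one_mul_rpow_le_rpow (by linarith : 1 < p)
  calc _ ≤ p * (p - 1) * (Real.exp 1 * ∑ i, |(A *ᵥ y - b) i| ^ (p - 2) * (A *ᵥ z) i ^ 2 +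
        (p - 1) ^ (p - 2) * √((x - y) ⬝ᵥ M *ᵥ (x - y)) ^ (p - 2) * (z ⬝ᵥ M *ᵥ z)) :=
        mul_le_mul_of_nonneg_left hsum (by nlinarith)
    _ ≤ _ := by linarith [mul_le_mul_of_nonneg_right hcoef hK]
end

section
/- Let p ≥ 2, let A be a real n×d matrix of full column rank, b ∈ ℝ^n, and let w ∈ ℝ^n be strictly positive with w_i ≥ σ(W^{1/2−1/p}A)_i for all i and Σ_i w_i ≤ 2d, where W = diag(w). Set M = A^⊤W^{1−2/p}A and f(x) = ‖Ax−b‖_p^p, and let x* be a global minimizer of f. If x ∈ ℝ^d and ℰ ≥ 0 satisfy f(x) − f(x*) ≤ ℰ, then ‖x − x*‖_M ≤ 2^{3/2}·d^{1/2−1/p}·ℰ^{1/p}. -/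
open Matrix

lemma sq_rpow' (a q : ℝ) : (a^2 : ℝ) ^ q = |a| ^ (2*q) := by
  rw [← sq_abs, ← Real.rpow_natCast |a| 2, ← Real.rpow_mul (abs_nonneg a)]
  norm_num

lemma rpow_add_rpow_le' {s t q : ℝ} (hs : 0 ≤ s) (ht : 0 ≤ t) (hq : 1 ≤ q) :
    s ^ q + t ^ q ≤ (s + t) ^ q := by
  lift s to NNReal using hs
  lift t to NNReal using ht
  have := NNReal.add_rpow_le_rpow_add s t hq
  exact_mod_cast this

lemma clarkson' {p : ℝ} (hp : 2 ≤ p) (a c : ℝ) :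
    2 * |a| ^ p + 2 * |c| ^ p ≤ |a + c| ^ p + |a - c| ^ p := by
  have hq : 1 ≤ p / 2 := by linarith
  have h1 : ((a^2 + c^2) : ℝ) ^ (p/2) ≤ (|a+c| ^ p + |a-c| ^ p) / 2 := by
    have := Real.rpow_arith_mean_le_arith_mean_rpow (Finset.univ : Finset (Fin 2))
      ![1/2, 1/2] ![(a+c)^2, (a-c)^2]
      (by intro i _; fin_cases i <;> norm_num)
      (by simp [Fin.sum_univ_two]; norm_num)
      (by intro i _; fin_cases i <;> simp <;> positivity) hq
    simp only [Fin.sum_univ_two, Matrix.cons_val_zero, Matrix.cons_val_one, Matrix.head_cons] at this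
    rw [sq_rpow', sq_rpow'] at this
    have he : 2 * (p/2) = p := by ring
    rw [he] at this
    calc ((a^2 + c^2) : ℝ) ^ (p/2) = (1/2*(a+c)^2 + 1/2*(a-c)^2) ^ (p/2) := by ring_nf
      _ ≤ 1/2 * |a+c| ^ p + 1/2 * |a-c| ^ p := this
      _ = (|a+c| ^ p + |a-c| ^ p)/2 := by ring
  have h2 : |a| ^ p + |c| ^ p ≤ ((a^2 + c^2) : ℝ) ^ (p/2) := by
    have := rpow_add_rpow_le' (sq_nonneg a) (sq_nonneg c) hq
    rw [sq_rpow', sq_rpow'] at this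
    have he : 2 * (p/2) = p := by ring
    rw [he] at this
    exact this
  linarith

lemma holder_piece {n : ℕ} {p : ℝ} (hp : 2 ≤ p) (w v : Fin n → ℝ) (hw : ∀ i, 0 < w i) :
    ∑ i, w i ^ (1 - 2/p) * (v i)^2 ≤
      (∑ i, w i) ^ (1 - 2/p) * (∑ i, |v i| ^ p) ^ (2/p) := by
  have hp0 : (0:ℝ) < p := by linarith
  have hp2 : 1 ≤ p/2 := by linarith
  have H := Real.inner_le_weight_mul_Lp_of_nonneg (Finset.univ) hp2 w
    (fun i => (v i)^2 / (w i)^(2/p)) (fun i => (hw i).le)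
    (fun i => by have := hw i; positivity)
  have e1 : ∀ i : Fin n, w i * ((v i)^2 / (w i)^(2/p)) = w i ^ (1 - 2/p) * (v i)^2 := by
    intro i
    rw [Real.rpow_sub (hw i), Real.rpow_one]
    ring
  have e2 : ∀ i : Fin n, w i * ((v i)^2 / (w i)^(2/p)) ^ (p/2) = |v i| ^ p := by
    intro i
    rw [Real.div_rpow (sq_nonneg _) (Real.rpow_nonneg (hw i).le _), sq_rpow',
      ← Real.rpow_mul (hw i).le]
    have h1 : 2/p*(p/2) = 1 := by field_simp
    have h2 : 2*(p/2) = p := by ring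
    rw [h1, h2, Real.rpow_one, mul_comm, div_mul_cancel₀ _ (hw i).ne']
  have hinv : (p/2)⁻¹ = 2/p := by
    rw [inv_div]
  simp only [e1, e2, hinv] at H
  exact H

lemma quadform_eq {n d : ℕ} (A : Matrix (Fin n) (Fin d) ℝ) (wE : Fin n → ℝ)
    (M : Matrix (Fin d) (Fin d) ℝ)
    (hM : M = Aᵀ * Matrix.diagonal wE * A) (u : Fin d → ℝ) :
    u ⬝ᵥ (M *ᵥ u) = ∑ i, wE i * (A *ᵥ u) i ^ 2 := by
  subst hM
  rw [Matrix.mul_assoc, ← Matrix.mulVec_mulVec, Matrix.dotProduct_mulVec, Matrix.vecMul_transpose,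
    ← Matrix.mulVec_mulVec]
  simp only [dotProduct, Matrix.mulVec_diagonal]
  exact Finset.sum_congr rfl fun i _ => by ring

theorem stmt13 {n d : ℕ} (A : Matrix (Fin n) (Fin d) ℝ) (hA : A.rank = d)
    (b : Fin n → ℝ) (p : ℝ) (hp : 2 ≤ p)
    (w : Fin n → ℝ) (hw : ∀ i, 0 < w i)
    (hσ : ∀ i, levScore (Matrix.diagonal (fun j => w j ^ ((1:ℝ)/2 - 1/p)) * A) i ≤ w i)
    (hw1 : ∑ i, w i ≤ 2 * d)
    (M : Matrix (Fin d) (Fin d) ℝ)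
    (hM : M = Aᵀ * Matrix.diagonal (fun i => w i ^ (1 - 2/p)) * A)
    (xstar : Fin d → ℝ)
    (hmin : ∀ y : Fin d → ℝ,
      ∑ i, |(A *ᵥ xstar - b) i| ^ p ≤ ∑ i, |(A *ᵥ y - b) i| ^ p)
    (x : Fin d → ℝ) (E : ℝ) (hE : 0 ≤ E)
    (hx : (∑ i, |(A *ᵥ x - b) i| ^ p) - (∑ i, |(A *ᵥ xstar - b) i| ^ p) ≤ E) :
    Real.sqrt ((x - xstar) ⬝ᵥ (M *ᵥ (x - xstar))) ≤
      (2:ℝ) ^ ((3:ℝ)/2) * (d : ℝ) ^ ((1:ℝ)/2 - 1/p) * E ^ (1/p) := by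
  have hp0 : (0:ℝ) < p := by linarith
  set v : Fin n → ℝ := A *ᵥ (x - xstar) with hv
  set r : Fin n → ℝ := A *ᵥ xstar - b with hr
  set u : Fin n → ℝ := A *ᵥ x - b with hu
  have huv : ∀ i, v i = u i - r i := by
    intro i
    simp only [hv, hr, hu, Matrix.mulVec_sub, Pi.sub_apply]
    ring
  -- optimality at the midpoint
  have hmid : ∀ i, (A *ᵥ ((2:ℝ)⁻¹ • (x + xstar)) - b) i = (u i + r i)/2 := by
    intro i
    simp only [Matrix.mulVec_smul, Matrix.mulVec_add, Pi.sub_apply, Pi.smul_apply, Pi.add_apply,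
      smul_eq_mul, hu, hr]
    ring
  have hoptm : ∑ i, |r i| ^ p ≤ ∑ i, |(u i + r i)/2| ^ p := by
    have h := hmin ((2:ℝ)⁻¹ • (x + xstar))
    simpa only [hmid] using h
  -- Clarkson summed
  have hclsum : ∑ i, (2 * |(u i + r i)/2| ^ p + 2 * |v i / 2| ^ p)
      ≤ ∑ i, (|u i| ^ p + |r i| ^ p) := by
    apply Finset.sum_le_sum
    intro i _
    have h := clarkson' hp ((u i + r i)/2) ((u i - r i)/2)
    have e1 : (u i + r i)/2 + (u i - r i)/2 = u i := by ring
    have e2 : (u i + r i)/2 - (u i - r i)/2 = r i := by ring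
    have e3 : v i / 2 = (u i - r i)/2 := by rw [huv i]
    rw [e1, e2] at h
    rw [e3]
    exact h
  have hSE : 2 * ∑ i, |v i / 2| ^ p ≤ E := by
    have h1 : 2 * ∑ i, |(u i + r i)/2| ^ p + 2 * ∑ i, |v i / 2| ^ p
        ≤ ∑ i, |u i| ^ p + ∑ i, |r i| ^ p := by
      have := hclsum
      rw [Finset.sum_add_distrib, Finset.sum_add_distrib, ← Finset.mul_sum, ← Finset.mul_sum]
        at this
      exact this
    have h2 : 2 * ∑ i, |r i| ^ p ≤ 2 * ∑ i, |(u i + r i)/2| ^ p := by linarith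
    linarith
  -- S := sum of |v i|^p
  set S : ℝ := ∑ i, |v i| ^ p with hS
  have hSnn : 0 ≤ S := Finset.sum_nonneg fun i _ => Real.rpow_nonneg (abs_nonneg _) _
  have h2p : (0:ℝ) < (2:ℝ) ^ p := Real.rpow_pos_of_pos two_pos p
  have hvdiv : ∀ i : Fin n, |v i / 2| ^ p = |v i| ^ p / 2 ^ p := by
    intro i
    rw [abs_div, abs_two, Real.div_rpow (abs_nonneg _) (by norm_num)]
  have hSbound : S ≤ 2 ^ p * E / 2 := by
    have : 2 * (S / 2 ^ p) ≤ E := by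
      have hsum : ∑ i, |v i / 2| ^ p = S / 2 ^ p := by
        rw [hS, Finset.sum_div]
        exact Finset.sum_congr rfl fun i _ => hvdiv i
      rw [← hsum]; exact hSE
    have h3 : S / 2 ^ p ≤ E / 2 := by linarith
    calc S = S / 2 ^ p * 2 ^ p := by field_simp
      _ ≤ E / 2 * 2 ^ p := mul_le_mul_of_nonneg_right h3 h2p.le
      _ = 2 ^ p * E / 2 := by ring
  -- quadratic form and Hölder
  have hQ : (x - xstar) ⬝ᵥ (M *ᵥ (x - xstar)) = ∑ i, w i ^ (1 - 2/p) * (v i)^2 :=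
    quadform_eq A _ M hM (x - xstar)
  have hHold := holder_piece hp w v hw
  have hexp1 : (0:ℝ) ≤ 1 - 2/p := by
    have : 2/p ≤ 1 := by rw [div_le_one hp0]; linarith
    linarith
  have hexp2 : (0:ℝ) ≤ 2/p := by positivity
  have hwsum_nn : (0:ℝ) ≤ ∑ i, w i := Finset.sum_nonneg fun i _ => (hw i).le
  have hB : (x - xstar) ⬝ᵥ (M *ᵥ (x - xstar)) ≤
      (2*d) ^ (1 - 2/p) * (2 ^ p * E / 2) ^ (2/p) := by
    rw [hQ]
    calc ∑ i, w i ^ (1 - 2/p) * (v i)^2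
        ≤ (∑ i, w i) ^ (1 - 2/p) * S ^ (2/p) := hHold
      _ ≤ (2*d) ^ (1 - 2/p) * (2 ^ p * E / 2) ^ (2/p) := by
          apply mul_le_mul
          · exact Real.rpow_le_rpow hwsum_nn hw1 hexp1
          · exact Real.rpow_le_rpow hSnn hSbound hexp2
          · exact Real.rpow_nonneg hSnn _
          · exact Real.rpow_nonneg (by positivity) _
  -- final computation
  have hdnn : (0:ℝ) ≤ (d:ℝ) := Nat.cast_nonneg d
  have key : Real.sqrt ((2*d) ^ (1 - 2/p) * (2 ^ p * E / 2) ^ (2/p)) =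
      (2:ℝ) ^ ((3:ℝ)/2 - 2/p) * (d:ℝ) ^ ((1:ℝ)/2 - 1/p) * E ^ (1/p) := by
    have hbnn : (0:ℝ) ≤ (2*d) ^ (1 - 2/p) := Real.rpow_nonneg (by positivity) _
    have hcnn : (0:ℝ) ≤ (2:ℝ) ^ p * E / 2 := by positivity
    rw [Real.sqrt_eq_rpow, Real.mul_rpow hbnn (Real.rpow_nonneg hcnn _),
      ← Real.rpow_mul (by positivity : (0:ℝ) ≤ 2*(d:ℝ)), ← Real.rpow_mul hcnn]
    have e1 : (2 ^ p * E / 2 : ℝ) = 2 ^ (p - 1) * E := by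
      rw [Real.rpow_sub two_pos, Real.rpow_one]; ring
    rw [e1, Real.mul_rpow (Real.rpow_nonneg (by norm_num) _) hE,
      Real.mul_rpow (by norm_num : (0:ℝ) ≤ 2) hdnn]
    have ha : ((1:ℝ) - 2/p) * (1/2) = 1/2 - 1/p := by ring
    have hc : (2:ℝ)/p * (1/2) = 1/p := by ring
    have hpe : (p - 1) * (1/p) = 1 - 1/p := by field_simp
    have h2a : (2:ℝ) ^ ((1:ℝ)/2 - 1/p) * 2 ^ (1 - 1/p) = 2 ^ ((3:ℝ)/2 - 2/p) := by
      rw [← Real.rpow_add two_pos]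
      congr 1
      ring
    rw [ha, hc, ← Real.rpow_mul (by norm_num : (0:ℝ) ≤ 2), hpe, ← h2a]
    ring
  have h2le : (2:ℝ) ^ ((3:ℝ)/2 - 2/p) ≤ 2 ^ ((3:ℝ)/2) := by
    apply Real.rpow_le_rpow_of_exponent_le one_le_two
    have : 0 < 2/p := by positivity
    linarith
  calc Real.sqrt ((x - xstar) ⬝ᵥ (M *ᵥ (x - xstar)))
      ≤ Real.sqrt ((2*d) ^ (1 - 2/p) * (2 ^ p * E / 2) ^ (2/p)) := Real.sqrt_le_sqrt hB
    _ = (2:ℝ) ^ ((3:ℝ)/2 - 2/p) * (d:ℝ) ^ ((1:ℝ)/2 - 1/p) * E ^ (1/p) := key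
    _ ≤ (2:ℝ) ^ ((3:ℝ)/2) * (d : ℝ) ^ ((1:ℝ)/2 - 1/p) * E ^ (1/p) := by
        apply mul_le_mul_of_nonneg_right _ (Real.rpow_nonneg hE _)
        exact mul_le_mul_of_nonneg_right h2le (Real.rpow_nonneg hdnn _)
end

section
/- Let p ≥ 2 and x, Δ ∈ ℝ^n. Define g, r ∈ ℝ^n by g_i = p|x_i|^{p−2}x_i and r_i = |x_i|^{p−2} for i ∈ [n]. Then (p/8)·Σ_{i∈[n]} r_iΔ_i^2 + 2^{−p−1}·‖Δ‖_p^p ≤ ‖x+Δ‖_p^p − ‖x‖_p^p − g^⊤Δ ≤ 2p^2·Σ_{i∈[n]} r_iΔ_i^2 + p^p·‖Δ‖_p^p. -/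
/-!
The inequality is coordinatewise. For `a ≠ 0`, dividing by `|a| ^ p` with `t = d / a` reduces it
to bounding `h t = |1 + t| ^ p - 1 - p * t` between `p / 8 * t ^ 2 + 2 ^ (-p - 1) * |t| ^ p` and
`2 * p ^ 2 * t ^ 2 + p ^ p * |t| ^ p`. All three vanish at `0`, so it suffices to compare their
derivatives on either side of `0`. With `ψ y = |y| ^ (p - 2) * y` one has `h' t = p * (ψ (1 + t) - 1)`,
and the comparisons follow from Bernoulli's inequality, superadditivity of `y ↦ y ^ (p - 1)`, and
`exp x ≤ 1 + 2 x` on `[0, 1]`.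
-/

open Real Set

lemma le_of_hasDerivAt_of_deriv_sign {f g f' g' : ℝ → ℝ}
    (hf : ∀ t, HasDerivAt f (f' t) t) (hg : ∀ t, HasDerivAt g (g' t) t) (h₀ : f 0 = g 0)
    (hpos : ∀ t, 0 < t → f' t ≤ g' t) (hneg : ∀ t < 0, g' t ≤ f' t) (t : ℝ) : f t ≤ g t := by
  have hd : ∀ t, HasDerivAt (g - f) (g' t - f' t) t := fun t => (hg t).sub (hf t)
  have hcont : ContinuousOn (g - f) univ := fun t _ => (hd t).continuousAt.continuousWithinAt
  suffices 0 ≤ (g - f) t by simpa [sub_nonneg] using this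
  rcases le_total 0 t with ht | ht
  · have hmono := monotoneOn_of_hasDerivWithinAt_nonneg (convex_Ici 0) (hcont.mono (subset_univ _))
      (fun x _ => (hd x).hasDerivWithinAt) (fun x hx => sub_nonneg.2 (hpos x (by simpa using hx)))
    simpa [h₀] using hmono self_mem_Ici ht ht
  · have hanti := antitoneOn_of_hasDerivWithinAt_nonpos (convex_Iic 0) (hcont.mono (subset_univ _))
      (fun x _ => (hd x).hasDerivWithinAt) (fun x hx => sub_nonpos.2 (hneg x (by simpa using hx)))
    simpa [h₀] using hanti ht self_mem_Iic ht

lemma abs_rpow_sub_two_mul_self_of_nonneg {p y : ℝ} (hp : 1 < p) (hy : 0 ≤ y) :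
    |y| ^ (p - 2) * y = y ^ (p - 1) := by
  rw [abs_of_nonneg hy, show p - 1 = p - 2 + 1 by ring, rpow_add' hy (by linarith), rpow_one]

lemma abs_rpow_sub_two_mul_self_of_nonpos {p y : ℝ} (hp : 1 < p) (hy : y ≤ 0) :
    |y| ^ (p - 2) * y = -(-y) ^ (p - 1) := by
  have h := abs_rpow_sub_two_mul_self_of_nonneg hp (neg_nonneg.2 hy)
  rw [abs_neg] at h
  linarith

lemma abs_rpow_sub_two_mul_sq {p : ℝ} (hp : p ≠ 0) (a : ℝ) : |a| ^ (p - 2) * a ^ 2 = |a| ^ p := by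
  rw [← sq_abs a, ← rpow_two, ← rpow_add' (abs_nonneg a) (by simpa using hp), sub_add_cancel]

lemma two_rpow_neg_sub_one_mul_rpow (p : ℝ) {u : ℝ} (hu : 0 ≤ u) :
    (2 : ℝ) ^ (-p - 1) * u ^ (p - 1) = (u / 2) ^ (p - 1) / 4 := by
  rw [show -p - 1 = -(p - 1) + -2 by ring, rpow_add two_pos, rpow_neg zero_le_two,
    div_rpow hu zero_le_two]
  norm_num
  ring

lemma le_one_add_rpow_sub_one {p t : ℝ} (hp : 2 ≤ p) (ht : 0 ≤ t) :
    t / 4 + (2 : ℝ) ^ (-p - 1) * t ^ (p - 1) ≤ (1 + t) ^ (p - 1) - 1 := by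
  have hq : 1 ≤ p - 1 := by linarith
  have hbern : 1 + (p - 1) * t ≤ (1 + t) ^ (p - 1) :=
    one_add_mul_self_le_rpow_one_add (by linarith) hq
  have hsuper : 1 + t ^ (p - 1) ≤ (1 + t) ^ (p - 1) := by
    simpa using add_rpow_le_rpow_add zero_le_one ht hq
  have hhalf : (t / 2) ^ (p - 1) ≤ t ^ (p - 1) :=
    rpow_le_rpow (by positivity) (by linarith) (by linarith)
  rw [two_rpow_neg_sub_one_mul_rpow p ht]
  nlinarith

lemma le_one_sub_abs_rpow_mul {p u : ℝ} (hp : 2 ≤ p) (hu : 0 ≤ u) :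
    u / 4 + (2 : ℝ) ^ (-p - 1) * u ^ (p - 1) ≤ 1 - |1 - u| ^ (p - 2) * (1 - u) := by
  have hq : 1 ≤ p - 1 := by linarith
  rw [two_rpow_neg_sub_one_mul_rpow p hu]
  rcases le_total u 2 with hu2 | hu2
  · have hsmall : (u / 2) ^ (p - 1) ≤ u / 2 :=
      rpow_le_self_of_le_one (by positivity) (by linarith) hq
    rcases le_total u 1 with hu1 | hu1
    · rw [abs_rpow_sub_two_mul_self_of_nonneg (by linarith) (by linarith)]
      have hpow : (1 - u) ^ (p - 1) ≤ 1 - u := rpow_le_self_of_le_one (by linarith) (by linarith) hq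
      linarith
    · rw [abs_rpow_sub_two_mul_self_of_nonpos (by linarith) (by linarith)]
      have hpow : 0 ≤ (-(1 - u)) ^ (p - 1) := rpow_nonneg (by linarith) _
      linarith
  · rw [abs_rpow_sub_two_mul_self_of_nonpos (by linarith) (by linarith)]
    have hmono : (u / 2) ^ (p - 1) ≤ (-(1 - u)) ^ (p - 1) :=
      rpow_le_rpow (by positivity) (by linarith) (by linarith)
    have hlarge : u / 2 ≤ (u / 2) ^ (p - 1) := self_le_rpow_of_one_le (by linarith) hq
    linarith

lemma one_add_rpow_sub_one_le {p t : ℝ} (hp : 2 ≤ p) (ht : 0 ≤ t) :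
    (1 + t) ^ (p - 1) - 1 ≤ 4 * p * t + p ^ p * t ^ (p - 1) := by
  have hq : 0 ≤ p - 1 := by linarith
  have hpow : 0 ≤ p ^ p * t ^ (p - 1) := by positivity
  rcases le_total ((p - 1) * t) 1 with hsmall | hlarge
  · have hexp : (1 + t) ^ (p - 1) ≤ exp ((p - 1) * t) := by
      rw [mul_comm, exp_mul]
      exact rpow_le_rpow (by linarith) (by linarith [add_one_le_exp t]) hq
    have hexp_le := (abs_le.1 (abs_exp_sub_one_le (x := (p - 1) * t)
      (abs_le.2 ⟨by nlinarith, hsmall⟩))).2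
    rw [abs_of_nonneg (by positivity)] at hexp_le
    nlinarith
  · have hbase : (1 + t) ^ (p - 1) ≤ (p * t) ^ (p - 1) :=
      rpow_le_rpow (by linarith) (by linarith) hq
    have hexp : p ^ (p - 1) ≤ p ^ p := rpow_le_rpow_of_exponent_le (by linarith) (by linarith)
    rw [mul_rpow (by linarith) ht] at hbase
    nlinarith [mul_le_mul_of_nonneg_right hexp (rpow_nonneg ht (p - 1))]

lemma one_sub_abs_rpow_mul_le {p u : ℝ} (hp : 2 ≤ p) (hu : 0 ≤ u) :
    1 - |1 - u| ^ (p - 2) * (1 - u) ≤ 4 * p * u + p ^ p * u ^ (p - 1) := by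
  have hq : 1 ≤ p - 1 := by linarith
  have hpow : 0 ≤ p ^ p * u ^ (p - 1) := by positivity
  rcases le_total u 1 with hu1 | hu1
  · rw [abs_rpow_sub_two_mul_self_of_nonneg (by linarith) (by linarith)]
    have hbern : 1 + (p - 1) * -u ≤ (1 + -u) ^ (p - 1) :=
      one_add_mul_self_le_rpow_one_add (by linarith) hq
    rw [← sub_eq_add_neg] at hbern
    nlinarith
  · rw [abs_rpow_sub_two_mul_self_of_nonpos (by linarith) (by linarith)]
    have hbase : (-(1 - u)) ^ (p - 1) ≤ u ^ (p - 1) :=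
      rpow_le_rpow (by linarith) (by linarith) (by linarith)
    have hpp : 1 ≤ p ^ p := one_le_rpow (by linarith) (by linarith)
    nlinarith [mul_le_mul_of_nonneg_right hpp (rpow_nonneg hu (p - 1))]

lemma hasDerivAt_abs_one_add_rpow {p : ℝ} (hp : 1 < p) (t : ℝ) :
    HasDerivAt (fun t => |1 + t| ^ p - 1 - p * t) (p * (|1 + t| ^ (p - 2) * (1 + t)) - p) t := by
  have h := ((hasDerivAt_abs_rpow (1 + t) hp).comp t ((hasDerivAt_id t).const_add 1)).sub_const 1
    |>.sub ((hasDerivAt_id t).const_mul p)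
  exact h.congr_deriv (by ring)

lemma hasDerivAt_sq_add_abs_rpow {p : ℝ} (hp : 1 < p) (a b t : ℝ) :
    HasDerivAt (fun t => a * t ^ 2 + b * |t| ^ p) (2 * a * t + b * p * (|t| ^ (p - 2) * t)) t :=
  ((hasDerivAt_pow 2 t).const_mul a).add ((hasDerivAt_abs_rpow t hp).const_mul b)
    |>.congr_deriv (by push_cast; ring)

lemma lower_bound_abs_one_add_rpow {p : ℝ} (hp : 2 ≤ p) (t : ℝ) :
    p / 8 * t ^ 2 + (2 : ℝ) ^ (-p - 1) * |t| ^ p ≤ |1 + t| ^ p - 1 - p * t := by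
  have hp1 : 1 < p := by linarith
  refine le_of_hasDerivAt_of_deriv_sign (hasDerivAt_sq_add_abs_rpow hp1 _ _)
    (hasDerivAt_abs_one_add_rpow hp1) (by simp [zero_rpow (by linarith : p ≠ 0)]) ?_ ?_ t
  · intro t ht
    rw [abs_rpow_sub_two_mul_self_of_nonneg hp1 ht.le,
      abs_rpow_sub_two_mul_self_of_nonneg hp1 (by linarith)]
    nlinarith [le_one_add_rpow_sub_one hp ht.le]
  · intro t ht
    have h := le_one_sub_abs_rpow_mul hp (neg_nonneg.2 ht.le)
    rw [sub_neg_eq_add] at h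
    rw [abs_rpow_sub_two_mul_self_of_nonpos hp1 ht.le]
    nlinarith

lemma upper_bound_abs_one_add_rpow {p : ℝ} (hp : 2 ≤ p) (t : ℝ) :
    |1 + t| ^ p - 1 - p * t ≤ 2 * p ^ 2 * t ^ 2 + p ^ p * |t| ^ p := by
  have hp1 : 1 < p := by linarith
  refine le_of_hasDerivAt_of_deriv_sign (hasDerivAt_abs_one_add_rpow hp1)
    (hasDerivAt_sq_add_abs_rpow hp1 _ _) (by simp [zero_rpow (by linarith : p ≠ 0)]) ?_ ?_ t
  · intro t ht
    rw [abs_rpow_sub_two_mul_self_of_nonneg hp1 ht.le,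
      abs_rpow_sub_two_mul_self_of_nonneg hp1 (by linarith)]
    nlinarith [one_add_rpow_sub_one_le hp ht.le]
  · intro t ht
    have h := one_sub_abs_rpow_mul_le hp (neg_nonneg.2 ht.le)
    rw [sub_neg_eq_add] at h
    rw [abs_rpow_sub_two_mul_self_of_nonpos hp1 ht.le]
    nlinarith

lemma abs_add_rpow_sub_sub_eq {p a : ℝ} (hp : p ≠ 0) (ha : a ≠ 0) (d : ℝ) :
    |a + d| ^ p - |a| ^ p - p * |a| ^ (p - 2) * a * d =
      |a| ^ p * (|1 + d / a| ^ p - 1 - p * (d / a)) := by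
  have hsplit : a + d = a * (1 + d / a) := by field_simp
  rw [hsplit, abs_mul, mul_rpow (abs_nonneg a) (abs_nonneg _), ← abs_rpow_sub_two_mul_sq hp a]
  field_simp

lemma abs_rpow_sub_two_mul_sq_eq {p a : ℝ} (hp : p ≠ 0) (ha : a ≠ 0) (d : ℝ) :
    |a| ^ (p - 2) * d ^ 2 = |a| ^ p * (d / a) ^ 2 := by
  rw [← abs_rpow_sub_two_mul_sq hp a]
  field_simp

lemma abs_rpow_eq_mul_abs_div_rpow {p a : ℝ} (ha : a ≠ 0) (d : ℝ) :
    |d| ^ p = |a| ^ p * |d / a| ^ p := by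
  rw [← mul_rpow (abs_nonneg a) (abs_nonneg _), ← abs_mul, mul_div_cancel₀ d ha]

lemma bregman_abs_rpow_bounds {p : ℝ} (hp : 2 ≤ p) (a d : ℝ) :
    p / 8 * (|a| ^ (p - 2) * d ^ 2) + (2 : ℝ) ^ (-p - 1) * |d| ^ p ≤
        |a + d| ^ p - |a| ^ p - p * |a| ^ (p - 2) * a * d ∧
      |a + d| ^ p - |a| ^ p - p * |a| ^ (p - 2) * a * d ≤
        2 * p ^ 2 * (|a| ^ (p - 2) * d ^ 2) + p ^ p * |d| ^ p := by
  have hp0 : p ≠ 0 := by positivity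
  rcases eq_or_ne a 0 with rfl | ha
  · have hc : (2 : ℝ) ^ (-p - 1) ≤ 1 / 8 := by
      calc (2 : ℝ) ^ (-p - 1) ≤ 2 ^ (-3 : ℝ) := rpow_le_rpow_of_exponent_le one_le_two (by linarith)
        _ = 1 / 8 := by norm_num [rpow_neg, rpow_natCast]
    have hpp : 1 ≤ p ^ p := one_le_rpow (by linarith) (by linarith)
    have hd : 0 ≤ |d| ^ p := rpow_nonneg (abs_nonneg d) p
    -- `|0| ^ (p - 2)` is `1` when `p = 2` and `0` otherwise
    rcases hp.eq_or_lt with rfl | hp2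
    · norm_num [rpow_two] at hc hpp ⊢
      constructor <;> nlinarith [sq_nonneg d]
    · simp only [abs_zero, zero_rpow hp0, zero_rpow (sub_ne_zero.2 hp2.ne'), zero_add]
      constructor <;> nlinarith
  · have hs : 0 ≤ |a| ^ p := rpow_nonneg (abs_nonneg a) p
    rw [abs_add_rpow_sub_sub_eq hp0 ha, abs_rpow_sub_two_mul_sq_eq hp0 ha,
      abs_rpow_eq_mul_abs_div_rpow ha d]
    constructor
    · nlinarith [mul_le_mul_of_nonneg_left (lower_bound_abs_one_add_rpow hp (d / a)) hs]
    · nlinarith [mul_le_mul_of_nonneg_left (upper_bound_abs_one_add_rpow hp (d / a)) hs]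

theorem stmt15 {n : ℕ} (p : ℝ) (hp : 2 ≤ p) (x Δ : Fin n → ℝ) :
    p/8 * (∑ i, |x i| ^ (p - 2) * (Δ i) ^ 2) + (2:ℝ) ^ (-p - 1) * (∑ i, |Δ i| ^ p) ≤
      (∑ i, |x i + Δ i| ^ p) - (∑ i, |x i| ^ p) - (∑ i, (p * |x i| ^ (p - 2) * x i) * Δ i) ∧
    (∑ i, |x i + Δ i| ^ p) - (∑ i, |x i| ^ p) - (∑ i, (p * |x i| ^ (p - 2) * x i) * Δ i) ≤
      2 * p ^ 2 * (∑ i, |x i| ^ (p - 2) * (Δ i) ^ 2) + p ^ p * (∑ i, |Δ i| ^ p) := by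
  simp only [Finset.mul_sum, ← Finset.sum_add_distrib, ← Finset.sum_sub_distrib]
  exact ⟨Finset.sum_le_sum fun i _ => (bregman_abs_rpow_bounds hp (x i) (Δ i)).1,
    Finset.sum_le_sum fun i _ => (bregman_abs_rpow_bounds hp (x i) (Δ i)).2⟩
end

section
/- Let A be a real n×d matrix, b ∈ ℝ^n with b not in the column space of A, let q ∈ (1, ∞), and let p = q/(q−1). Then the infimum m₁ = inf_{x∈ℝ^d} ‖Ax − b‖_q and the infimum m₂ = inf{ ‖y‖_p : y ∈ ℝ^n, A^⊤y = 0, b^⊤y = 1 } are both attained over nonempty feasible sets, both are positive, and m₁·m₂ = 1. -/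
/-!
Let `x₀` minimise `‖Ax - b‖_q` (a nearest point of the column space, which exists in finite
dimension) and let `r = Ax₀ - b`, which is nonzero because `b` is not in the column space.
Stationarity of `∑ |rᵢ|^q` along the columns of `A` says that `wᵢ = |rᵢ|^(q-2) rᵢ` satisfies
`Aᵀw = 0`; since `w ⬝ r = ‖r‖_q^q` and `|wᵢ|^p = |rᵢ|^q`, the rescaling `y₀ = -w / ‖r‖_q^q` is
dual feasible with `‖r‖_q ‖y₀‖_p = 1`. Conversely, for every dual feasible `y` and every `x`,
Hölder gives `1 = b ⬝ y = -(Ax - b) ⬝ y ≤ ‖Ax - b‖_q ‖y‖_p`. So `x₀` and `y₀` are optimal and the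
two optimal values are reciprocal.
-/

open Matrix Finset

lemma LinearMap.exists_forall_norm_apply_sub_le {M E : Type*} [AddCommGroup M] [Module ℝ M]
    [NormedAddCommGroup E] [NormedSpace ℝ E] [FiniteDimensional ℝ E] (f : M →ₗ[ℝ] E) (b : E) :
    ∃ x₀, ∀ x, ‖f x₀ - b‖ ≤ ‖f x - b‖ := by
  obtain ⟨_, ⟨x₀, rfl⟩, hx₀⟩ := (Submodule.closed_of_finiteDimensional (LinearMap.range f)
    ).exists_infDist_eq_dist ⟨0, (LinearMap.range f).zero_mem⟩ b
  refine ⟨x₀, fun x => ?_⟩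
  rw [← dist_eq_norm', ← dist_eq_norm', ← hx₀]
  exact Metric.infDist_le_dist_of_mem ⟨x, rfl⟩

lemma norm_toLp_ofReal_eq_sum {ι : Type*} [Fintype ι] {q : ℝ} (hq : 0 < q) (v : ι → ℝ) :
    ‖WithLp.toLp (ENNReal.ofReal q) v‖ = (∑ i, |v i| ^ q) ^ (1 / q) := by
  have hq' : (ENNReal.ofReal q).toReal = q := ENNReal.toReal_ofReal hq.le
  rw [PiLp.norm_eq_sum (hq'.symm ▸ hq), hq']
  rfl

lemma sum_abs_smul_rpow {ι : Type*} [Fintype ι] {p : ℝ} (hp : 0 < p) (c : ℝ) (v : ι → ℝ) :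
    (∑ i, |(c • v) i| ^ p) ^ (1 / p) = |c| * (∑ i, |v i| ^ p) ^ (1 / p) := by
  simp only [Pi.smul_apply, smul_eq_mul, abs_mul, Real.mul_rpow (abs_nonneg _) (abs_nonneg _),
    ← mul_sum]
  rw [Real.mul_rpow (by positivity) (by positivity), ← Real.rpow_mul (abs_nonneg _),
    mul_one_div_cancel hp.ne', Real.rpow_one]

section DualityMap

variable {ι : Type*}

/-- The gradient of `v ↦ ∑ |vᵢ|^q / q` at `r`. -/
noncomputable def dualityMap (q : ℝ) (r : ι → ℝ) : ι → ℝ := fun i => |r i| ^ (q - 2) * r i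

lemma abs_dualityMap {q : ℝ} (hq : 1 < q) (r : ι → ℝ) (i : ι) :
    |dualityMap q r i| = |r i| ^ (q - 1) := by
  rcases eq_or_ne (r i) 0 with h | h
  · simp [dualityMap, h, Real.zero_rpow (sub_ne_zero.mpr hq.ne')]
  · rw [dualityMap, abs_mul, abs_of_nonneg (by positivity),
      ← Real.rpow_add_one (abs_ne_zero.mpr h)]
    ring_nf

lemma dualityMap_mul_self {q : ℝ} (hq : q ≠ 0) (r : ι → ℝ) (i : ι) :
    dualityMap q r i * r i = |r i| ^ q := by
  rcases eq_or_ne (r i) 0 with h | h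
  · simp [dualityMap, h, Real.zero_rpow hq]
  · rw [dualityMap, mul_assoc, ← sq, ← sq_abs, ← Real.rpow_natCast,
      ← Real.rpow_add (abs_pos.mpr h)]
    norm_num

variable [Fintype ι]

lemma dualityMap_dotProduct_self {q : ℝ} (hq : q ≠ 0) (r : ι → ℝ) :
    dualityMap q r ⬝ᵥ r = ∑ i, |r i| ^ q :=
  sum_congr rfl fun i _ => dualityMap_mul_self hq r i

lemma sum_abs_dualityMap_rpow {p q : ℝ} (hqp : q.HolderConjugate p) (r : ι → ℝ) :
    ∑ i, |dualityMap q r i| ^ p = ∑ i, |r i| ^ q := by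
  refine sum_congr rfl fun i _ => ?_
  rw [abs_dualityMap hqp.lt, ← Real.rpow_mul (abs_nonneg _), hqp.sub_one_mul_conj]

lemma hasDerivAt_sum_abs_add_mul_rpow {q : ℝ} (hq : 1 < q) (r c : ι → ℝ) :
    HasDerivAt (fun t : ℝ => ∑ i, |r i + t * c i| ^ q) (q * (dualityMap q r ⬝ᵥ c)) 0 := by
  rw [dotProduct, mul_sum]
  refine HasDerivAt.fun_sum fun i _ => ?_
  have hline : HasDerivAt (fun t : ℝ => r i + t * c i) (c i) 0 := by
    simpa using ((hasDerivAt_id (0 : ℝ)).mul_const (c i)).const_add (r i)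
  have := (hasDerivAt_abs_rpow (r i + 0 * c i) hq).comp 0 hline
  simp only [zero_mul, add_zero] at this
  exact this.congr_deriv (by rw [dualityMap]; ring)

lemma dualityMap_dotProduct_eq_zero_of_forall_le {q : ℝ} (hq : 1 < q) {r c : ι → ℝ}
    (hmin : ∀ t : ℝ, ∑ i, |r i| ^ q ≤ ∑ i, |r i + t * c i| ^ q) :
    dualityMap q r ⬝ᵥ c = 0 := by
  have hloc : IsLocalMin (fun t : ℝ => ∑ i, |r i + t * c i| ^ q) 0 :=
    Filter.Eventually.of_forall fun t => by simpa using hmin t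
  have := hloc.hasDerivAt_eq_zero (hasDerivAt_sum_abs_add_mul_rpow hq r c)
  exact (mul_eq_zero.mp this).resolve_left (by positivity)

end DualityMap

namespace Matrix

variable {m n : Type*} [Fintype m] [Fintype n]

lemma transpose_mulVec_eq_zero_iff {A : Matrix m n ℝ} {y : m → ℝ} :
    Aᵀ *ᵥ y = 0 ↔ ∀ x, y ⬝ᵥ A *ᵥ x = 0 := by
  simp_rw [dotProduct_mulVec, ← mulVec_transpose]
  exact ⟨fun h x => by rw [h, zero_dotProduct], fun h => dotProduct_self_eq_zero.mp (h _)⟩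

lemma exists_forall_sum_abs_mulVec_sub_rpow_le (A : Matrix m n ℝ) (b : m → ℝ) {q : ℝ}
    (hq : 1 ≤ q) :
    ∃ x₀ : n → ℝ, ∀ x : n → ℝ,
      (∑ i, |(A *ᵥ x₀ - b) i| ^ q) ^ (1 / q) ≤ (∑ i, |(A *ᵥ x - b) i| ^ q) ^ (1 / q) := by
  have : Fact (1 ≤ ENNReal.ofReal q) := ⟨by simpa using ENNReal.ofReal_le_ofReal hq⟩
  let L := (WithLp.linearEquiv (ENNReal.ofReal q) ℝ (m → ℝ)).symm.toLinearMap ∘ₗ A.mulVecLin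
  obtain ⟨x₀, hx₀⟩ := L.exists_forall_norm_apply_sub_le (WithLp.toLp _ b)
  refine ⟨x₀, fun x => ?_⟩
  simp only [← norm_toLp_ofReal_eq_sum (zero_lt_one.trans_le hq)]
  exact hx₀ x

lemma transpose_mulVec_dualityMap_eq_zero {A : Matrix m n ℝ} {b : m → ℝ} {q : ℝ} (hq : 1 < q)
    {x₀ : n → ℝ} (hx₀ : ∀ x, ∑ i, |(A *ᵥ x₀ - b) i| ^ q ≤ ∑ i, |(A *ᵥ x - b) i| ^ q) :
    Aᵀ *ᵥ dualityMap q (A *ᵥ x₀ - b) = 0 :=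
  transpose_mulVec_eq_zero_iff.mpr fun v =>
    dualityMap_dotProduct_eq_zero_of_forall_le hq fun t => by
      simpa [mulVec_add, mulVec_smul, add_sub_right_comm] using hx₀ (x₀ + t • v)

lemma one_le_mul_of_transpose_mulVec_eq_zero {A : Matrix m n ℝ} {b : m → ℝ} {p q : ℝ}
    (hqp : q.HolderConjugate p) {y : m → ℝ} (hy : Aᵀ *ᵥ y = 0) (hby : b ⬝ᵥ y = 1)
    (x : n → ℝ) :
    1 ≤ (∑ i, |(A *ᵥ x - b) i| ^ q) ^ (1 / q) * (∑ i, |y i| ^ p) ^ (1 / p) := by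
  have hres : ∑ i, -(A *ᵥ x - b) i * y i = 1 := by
    have hAx : y ⬝ᵥ A *ᵥ x = 0 := transpose_mulVec_eq_zero_iff.mp hy x
    simp only [neg_mul, sum_neg_distrib]
    change -((A *ᵥ x - b) ⬝ᵥ y) = 1
    rw [sub_dotProduct, dotProduct_comm, hAx, hby]
    ring
  simpa only [hres, abs_neg] using Real.inner_le_Lp_mul_Lq univ (fun i => -(A *ᵥ x - b) i) y hqp

lemma exists_transpose_mulVec_eq_zero_mul_eq_one {A : Matrix m n ℝ} {b : m → ℝ} {p q : ℝ}
    (hqp : q.HolderConjugate p) {x₀ : n → ℝ}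
    (hx₀ : ∀ x, (∑ i, |(A *ᵥ x₀ - b) i| ^ q) ^ (1 / q) ≤ (∑ i, |(A *ᵥ x - b) i| ^ q) ^ (1 / q))
    (hr : A *ᵥ x₀ - b ≠ 0) :
    ∃ y₀, Aᵀ *ᵥ y₀ = 0 ∧ b ⬝ᵥ y₀ = 1 ∧
      (∑ i, |(A *ᵥ x₀ - b) i| ^ q) ^ (1 / q) * (∑ i, |y₀ i| ^ p) ^ (1 / p) = 1 := by
  have hq := hqp.pos
  set r := A *ᵥ x₀ - b
  set M := ∑ i, |r i| ^ q
  have hM : 0 < M := by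
    obtain ⟨i, hi⟩ := Function.ne_iff.mp hr
    exact (Real.rpow_pos_of_pos (abs_pos.mpr hi) q).trans_le
      (single_le_sum (f := fun j => |r j| ^ q) (fun j _ => by positivity) (mem_univ i))
  have hAw : Aᵀ *ᵥ dualityMap q r = 0 := transpose_mulVec_dualityMap_eq_zero hqp.lt fun x =>
    (Real.rpow_le_rpow_iff (by positivity) (by positivity) hqp.one_div_pos).mp (hx₀ x)
  have hbw : b ⬝ᵥ dualityMap q r = -M := by
    rw [show b = A *ᵥ x₀ - r from (sub_sub_cancel _ _).symm, sub_dotProduct, dotProduct_comm,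
      transpose_mulVec_eq_zero_iff.mp hAw, dotProduct_comm, dualityMap_dotProduct_self hq.ne']
    ring
  refine ⟨(-M⁻¹) • dualityMap q r, by rw [mulVec_smul, hAw, smul_zero], ?_, ?_⟩
  · rw [dotProduct_smul, hbw, smul_eq_mul]
    field_simp
  · rw [sum_abs_smul_rpow hqp.symm.pos, sum_abs_dualityMap_rpow hqp, abs_neg, abs_inv,
      abs_of_pos hM, mul_left_comm, ← Real.rpow_add hM, hqp.one_div_add_one_div, div_one,
      Real.rpow_one, inv_mul_cancel₀ hM.ne']

end Matrix

theorem stmt19 {n d : ℕ} (A : Matrix (Fin n) (Fin d) ℝ) (b : Fin n → ℝ)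
    (hb : b ∉ Set.range A.mulVec)
    (q : ℝ) (hq : 1 < q) (p : ℝ) (hp : p = q / (q - 1)) :
    (∃ x₀ : Fin d → ℝ, ∀ x : Fin d → ℝ,
      (∑ i, |(A *ᵥ x₀ - b) i| ^ q) ^ (1/q) ≤ (∑ i, |(A *ᵥ x - b) i| ^ q) ^ (1/q)) ∧
    (∃ y₀ : Fin n → ℝ, (Aᵀ *ᵥ y₀ = 0 ∧ b ⬝ᵥ y₀ = 1) ∧
      ∀ y : Fin n → ℝ, Aᵀ *ᵥ y = 0 → b ⬝ᵥ y = 1 →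
        (∑ i, |y₀ i| ^ p) ^ (1/p) ≤ (∑ i, |y i| ^ p) ^ (1/p)) ∧
    0 < sInf {t : ℝ | ∃ x : Fin d → ℝ, t = (∑ i, |(A *ᵥ x - b) i| ^ q) ^ (1/q)} ∧
    0 < sInf {t : ℝ | ∃ y : Fin n → ℝ,
        Aᵀ *ᵥ y = 0 ∧ b ⬝ᵥ y = 1 ∧ t = (∑ i, |y i| ^ p) ^ (1/p)} ∧
    sInf {t : ℝ | ∃ x : Fin d → ℝ, t = (∑ i, |(A *ᵥ x - b) i| ^ q) ^ (1/q)} *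
      sInf {t : ℝ | ∃ y : Fin n → ℝ,
        Aᵀ *ᵥ y = 0 ∧ b ⬝ᵥ y = 1 ∧ t = (∑ i, |y i| ^ p) ^ (1/p)} = 1 := by
  have hqp : q.HolderConjugate p := (Real.holderConjugate_iff_eq_conjExponent hq).mpr hp
  obtain ⟨x₀, hx₀⟩ := exists_forall_sum_abs_mulVec_sub_rpow_le A b hq.le
  have hr : A *ᵥ x₀ - b ≠ 0 := fun h => hb ⟨x₀, sub_eq_zero.mp h⟩
  obtain ⟨y₀, hy₀A, hy₀b, hmul⟩ := exists_transpose_mulVec_eq_zero_mul_eq_one hqp hx₀ hr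
  have hm₁ : 0 < (∑ i, |(A *ᵥ x₀ - b) i| ^ q) ^ (1 / q) :=
    pos_of_mul_pos_left (hmul ▸ one_pos) (by positivity)
  have hm₂ : 0 < (∑ i, |y₀ i| ^ p) ^ (1 / p) :=
    pos_of_mul_pos_right (hmul ▸ one_pos) (by positivity)
  have hy₀ : ∀ y, Aᵀ *ᵥ y = 0 → b ⬝ᵥ y = 1 →
      (∑ i, |y₀ i| ^ p) ^ (1 / p) ≤ (∑ i, |y i| ^ p) ^ (1 / p) := fun y hyA hyb =>
    le_of_mul_le_mul_left
      (by rw [hmul]; exact one_le_mul_of_transpose_mulVec_eq_zero hqp hyA hyb x₀) hm₁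
  have hinf₁ : sInf {t : ℝ | ∃ x, t = (∑ i, |(A *ᵥ x - b) i| ^ q) ^ (1 / q)} =
      (∑ i, |(A *ᵥ x₀ - b) i| ^ q) ^ (1 / q) :=
    IsLeast.csInf_eq ⟨⟨x₀, rfl⟩, by rintro _ ⟨x, rfl⟩; exact hx₀ x⟩
  have hinf₂ : sInf {t : ℝ | ∃ y, Aᵀ *ᵥ y = 0 ∧ b ⬝ᵥ y = 1 ∧ t = (∑ i, |y i| ^ p) ^ (1 / p)} =
      (∑ i, |y₀ i| ^ p) ^ (1 / p) :=
    IsLeast.csInf_eq ⟨⟨y₀, hy₀A, hy₀b, rfl⟩, by rintro _ ⟨y, hyA, hyb, rfl⟩; exact hy₀ y hyA hyb⟩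
  rw [hinf₁, hinf₂]
  exact ⟨⟨x₀, hx₀⟩, ⟨y₀, ⟨hy₀A, hy₀b⟩, hy₀⟩, hm₁, hm₂, hmul⟩
end
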